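/- arXiv:1007.0338 — 6 statements merged into one kernel-verified Lean document; each statement's English description precedes it below -/
import Mathlib

section
/- Let M be an n×n matrix over the quaternions satisfying M = conjugate-transpose of M (i.e. M is quaternionic Hermitian). Viewing M as a 2n×2n complex matrix via the standard embedding of the quaternions into M_2(ℂ), the determinant of this complex matrix is the square of a polynomial in the real entries of M (the Moore pfaffian/pfaffian norm), normalized so that the identity matrix has pfaffian norm 1. -/
open MvPolynomial

/-- The standard embedding of the quaternions into `M₂(ℂ)`:
`1 ↦ Id`, `i ↦ diag(i, -i)`, `j ↦ [[0,-1],[1,0]]`, `k ↦ [[0,-i],[-i,0]]`. -/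
noncomputable def quatToM2 (q : Quaternion ℝ) : Matrix (Fin 2) (Fin 2) ℂ :=
  !![(q.re : ℂ) + q.imI * Complex.I, -(q.imJ : ℂ) - q.imK * Complex.I;
     (q.imJ : ℂ) - q.imK * Complex.I, (q.re : ℂ) - q.imI * Complex.I]

/-- The reduced norm of a quaternionic `ι × ι` matrix: the determinant of the associated
complex `2|ι| × 2|ι|` matrix under the standard embedding of the quaternions into `M₂(ℂ)`. -/
noncomputable def Nrd {ι : Type*} [Fintype ι] [DecidableEq ι]
    (M : Matrix ι ι (Quaternion ℝ)) : ℂ :=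
  Matrix.det (Matrix.of fun p q : ι × Fin 2 => quatToM2 (M p.1 q.1) p.2 q.2)

/-- A quaternionic matrix is Hermitian if it equals its conjugate transpose. -/
def QHerm {ι : Type*} (M : Matrix ι ι (Quaternion ℝ)) : Prop :=
  ∀ i j, star (M j i) = M i j

/-- The four real entries of each quaternionic entry of a matrix, as a point at which
multivariable polynomials can be evaluated. -/
def entriesR {ι : Type*} (M : Matrix ι ι (Quaternion ℝ)) : ι × ι × Fin 4 → ℝ :=
  fun x => ![(M x.1 x.2.1).re, (M x.1 x.2.1).imI, (M x.1 x.2.1).imJ, (M x.1 x.2.1).imK] x.2.2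

open Matrix

theorem det_skew_isSquare' {F : Type*} [Field F] (h2 : (2:F) ≠ 0) :
    ∀ n (S : Matrix (Fin n) (Fin n) F), Sᵀ = -S → IsSquare S.det := by
  intro n
  induction n using Nat.strong_induction_on with
  | _ n IH =>
  intro S hS
  have hskew : ∀ i j, S j i = - S i j := by
    intro i j
    have := congrFun (congrFun hS i) j
    simpa [Matrix.transpose_apply] using this
  have hdiag : ∀ i, S i i = 0 := by
    intro i
    have h := hskew i i
    have h2' : (2:F) * S i i = 0 := by ring_nf; linear_combination h
    rcases mul_eq_zero.mp h2' with h' | h'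
    · exact absurd h' h2
    · exact h'
  rcases Nat.lt_or_ge n 2 with hn | hn
  · interval_cases n
    · exact ⟨1, by simp [Matrix.det_fin_zero]⟩
    · exact ⟨0, by rw [Matrix.det_fin_one, hdiag]; ring⟩
  · obtain ⟨m, rfl⟩ : ∃ m, n = m + 2 := ⟨n - 2, by omega⟩
    by_cases hrow : ∀ j, S 0 j = 0
    · exact ⟨0, by rw [Matrix.det_eq_zero_of_row_eq_zero 0 hrow]; ring⟩
    push_neg at hrow
    obtain ⟨j, hj⟩ := hrow
    have hj0 : j ≠ 0 := fun h => hj (by rw [h]; exact hdiag 0)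
    set e : Fin (m+2) ≃ Fin (m+2) := Equiv.swap 1 j with he
    set e2 : Fin 2 ⊕ Fin m ≃ Fin (m+2) :=
      (finSumFinEquiv : Fin 2 ⊕ Fin m ≃ Fin (2+m)).trans (finCongr (by omega)) with he2
    set T : Matrix (Fin 2 ⊕ Fin m) (Fin 2 ⊕ Fin m) F :=
      (S.submatrix e e).submatrix e2 e2 with hT
    have hTskew : ∀ i k, T k i = - T i k := by
      intro i k; simp only [hT, Matrix.submatrix_apply]; exact hskew _ _
    have hdetT : S.det = T.det := by
      rw [hT, Matrix.det_submatrix_equiv_self, Matrix.det_submatrix_equiv_self]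
    have he20 : e2 (Sum.inl 0) = 0 := rfl
    have he21 : e2 (Sum.inl 1) = 1 := rfl
    have hT01 : T (Sum.inl 0) (Sum.inl 1) ≠ 0 := by
      simp only [hT, Matrix.submatrix_apply, he20, he21]
      have h0 : e 0 = 0 := Equiv.swap_apply_of_ne_of_ne (by norm_num) (Ne.symm hj0)
      have h1 : e 1 = j := Equiv.swap_apply_left 1 j
      rw [h0, h1]; exact hj
    -- block decomposition
    set A := T.toBlocks₁₁ with hA
    set B := T.toBlocks₁₂ with hB
    set C := T.toBlocks₂₁ with hC
    set D := T.toBlocks₂₂ with hD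
    have hTfb : Matrix.fromBlocks A B C D = T := Matrix.fromBlocks_toBlocks T
    set a := T (Sum.inl 0) (Sum.inl 1) with ha
    have hAeq : A = !![0, a; -a, 0] := by
      ext i k
      fin_cases i <;> fin_cases k <;>
        simp [hA, Matrix.toBlocks₁₁, ha] <;>
        first
          | exact hdiag _
          | rfl
          | exact hskew _ _
    have hCeq : C = -Bᵀ := by
      ext i k
      simp only [hC, hB, Matrix.toBlocks₂₁, Matrix.toBlocks₁₂, Matrix.neg_apply,
        Matrix.transpose_apply, Matrix.of_apply]
      exact hTskew _ _
    have hDskew : Dᵀ = -D := by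
      ext i k
      simp only [hD, Matrix.toBlocks₂₂, Matrix.transpose_apply, Matrix.neg_apply, Matrix.of_apply]
      exact hTskew _ _
    set Ainv : Matrix (Fin 2) (Fin 2) F := !![0, -a⁻¹; a⁻¹, 0] with hAinv
    have hAAinv : A * Ainv = 1 := by
      rw [hAeq, hAinv]
      ext i k
      fin_cases i <;> fin_cases k <;>
        simp [Matrix.mul_apply, Fin.sum_univ_two, mul_inv_cancel₀ hT01, Matrix.one_apply] <;>
        field_simp
    have hAinvA : Ainv * A = 1 := by
      rw [hAeq, hAinv]
      ext i k
      fin_cases i <;> fin_cases k <;>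
        simp [Matrix.mul_apply, Fin.sum_univ_two, Matrix.one_apply] <;>
        field_simp
    have hAinvT : Ainvᵀ = -Ainv := by
      rw [hAinv]; ext i k; fin_cases i <;> fin_cases k <;> simp
    set X := -(Ainv * B) with hX
    have hXT : Xᵀ = Bᵀ * Ainv := by
      rw [hX, Matrix.transpose_neg, Matrix.transpose_mul, hAinvT]
      simp [Matrix.mul_neg, Matrix.neg_mul]
    set T' := Xᵀ * B + D with hT'
    have hAX : A * X + B = 0 := by
      rw [hX, Matrix.mul_neg, ← Matrix.mul_assoc, hAAinv, Matrix.one_mul, neg_add_cancel]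
    have hXAC : Xᵀ * A + C = 0 := by
      rw [hXT, hCeq, Matrix.mul_assoc, hAinvA, Matrix.mul_one, add_neg_cancel]
    have key : (Matrix.fromBlocks 1 0 Xᵀ 1) * T * (Matrix.fromBlocks 1 X 0 1)
        = Matrix.fromBlocks A 0 0 T' := by
      rw [← hTfb, Matrix.fromBlocks_multiply, Matrix.fromBlocks_multiply]
      simp only [Matrix.one_mul, Matrix.mul_one, Matrix.zero_mul, Matrix.mul_zero,
        add_zero, zero_add]
      rw [hAX, hXAC, Matrix.zero_mul, zero_add, hT']
    have hT'skew : T'ᵀ = -T' := by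
      rw [hT', Matrix.transpose_add, Matrix.transpose_mul, Matrix.transpose_transpose,
        hXT, hDskew, hX]
      simp only [Matrix.mul_neg, Matrix.mul_assoc, neg_add]
    obtain ⟨c, hc⟩ := IH m (by omega) T' hT'skew
    refine ⟨a * c, ?_⟩
    have hdetE1 : (Matrix.fromBlocks (1 : Matrix (Fin 2) (Fin 2) F) 0 Xᵀ 1).det = 1 := by
      rw [Matrix.det_fromBlocks_zero₁₂]; simp
    have hdetE2 : (Matrix.fromBlocks (1 : Matrix (Fin 2) (Fin 2) F) X 0 1).det = 1 := by
      rw [Matrix.det_fromBlocks_zero₂₁]; simp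
    have hdetA : A.det = a * a := by
      rw [hAeq, Matrix.det_fin_two_of]; ring
    have := congrArg Matrix.det key
    rw [Matrix.det_mul, Matrix.det_mul, hdetE1, hdetE2, Matrix.det_fromBlocks_zero₂₁,
      one_mul, mul_one, hdetA] at this
    rw [hdetT, this, hc]
    ring

theorem isSquare_of_fractionRing' {R : Type*} [CommRing R] [IsDomain R]
    [UniqueFactorizationMonoid R] (a : R)
    (h : IsSquare (algebraMap R (FractionRing R) a)) : IsSquare a := by
  obtain ⟨c, hc⟩ := h
  have hint : IsIntegral R c := by
    refine ⟨Polynomial.X ^ 2 - Polynomial.C a, Polynomial.monic_X_pow_sub_C a (by norm_num), ?_⟩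
    simp [Polynomial.eval₂_sub, hc, sq]
  obtain ⟨r, hr⟩ := IsIntegrallyClosed.isIntegral_iff.mp hint
  refine ⟨r, IsFractionRing.injective R (FractionRing R) ?_⟩
  rw [_root_.map_mul, hr, ← hc]

theorem exists_real_of_conj_fixed' {σ : Type*} (p : MvPolynomial σ ℂ)
    (h : MvPolynomial.map (starRingEnd ℂ) p = p) :
    ∃ t : MvPolynomial σ ℝ, MvPolynomial.map Complex.ofRealHom t = p := by
  refine ⟨∑ m ∈ p.support, monomial m ((p.coeff m).re), ?_⟩
  apply MvPolynomial.ext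
  intro m
  rw [MvPolynomial.coeff_map]
  have hre : ((p.coeff m).re : ℂ) = p.coeff m := by
    rw [← Complex.conj_eq_iff_re]
    have := congrArg (fun q => MvPolynomial.coeff m q) h
    simpa [MvPolynomial.coeff_map] using this
  classical
  by_cases hm : m ∈ p.support
  · rw [MvPolynomial.coeff_sum]
    rw [Finset.sum_eq_single m]
    · simp [MvPolynomial.coeff_monomial, hre]
    · intro b _ hb; simp [MvPolynomial.coeff_monomial, hb]
    · intro hmm; exact absurd hm hmm
  · have h0 : p.coeff m = 0 := by simpa [MvPolynomial.mem_support_iff] using hm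
    rw [MvPolynomial.coeff_sum]
    rw [Finset.sum_eq_zero]
    · simp [h0]
    · intro b hb
      rw [MvPolynomial.coeff_monomial]
      split
      · next heq => subst heq; exact absurd hb hm
      · rfl

namespace MoorePf

section blk
variable {R : Type*} [CommRing R] {R' : Type*} [CommRing R'] {n : ℕ}

/-- The standard 2×2 pattern of a (complexified) quaternion. -/
def pat (im r x y z : R) : Matrix (Fin 2) (Fin 2) R :=
  !![r + x * im, -y - z * im; y - z * im, r - x * im]

def uu : Matrix (Fin 2) (Fin 2) R := !![0, -1; 1, 0]

/-- Assemble an `n × n` matrix of `2 × 2` blocks into a flat matrix. -/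
def blkM (g : Fin n → Fin n → Matrix (Fin 2) (Fin 2) R) :
    Matrix (Fin n × Fin 2) (Fin n × Fin 2) R :=
  Matrix.of fun P Q => g P.1 Q.1 P.2 Q.2

lemma quatToM2_eq_pat (q : Quaternion ℝ) :
    quatToM2 q = pat Complex.I (q.re : ℂ) (q.imI : ℂ) (q.imJ : ℂ) (q.imK : ℂ) := rfl

lemma blkM_mul (g h : Fin n → Fin n → Matrix (Fin 2) (Fin 2) R) :
    blkM g * blkM h = blkM (fun p q => ∑ r, g p r * h r q) := by
  ext P Q
  simp [blkM, Matrix.mul_apply, Fintype.sum_prod_type, Matrix.sum_apply]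

lemma blkM_transpose (g : Fin n → Fin n → Matrix (Fin 2) (Fin 2) R) :
    (blkM g)ᵀ = blkM (fun p q => (g q p)ᵀ) := rfl

lemma blkM_map (f : R →+* R') (g : Fin n → Fin n → Matrix (Fin 2) (Fin 2) R) :
    (blkM g).map f = blkM (fun p q => (g p q).map f) := rfl

lemma blkM_neg (g : Fin n → Fin n → Matrix (Fin 2) (Fin 2) R) :
    -(blkM g) = blkM (fun p q => -(g p q)) := rfl

lemma blkM_sub (g h : Fin n → Fin n → Matrix (Fin 2) (Fin 2) R) :
    blkM g - blkM h = blkM (fun p q => g p q - h p q) := rfl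

lemma blkM_one :
    (blkM (fun p q : Fin n => if p = q then (1 : Matrix (Fin 2) (Fin 2) R) else 0)) = 1 := by
  ext ⟨p, a⟩ ⟨q, b⟩
  by_cases hpq : p = q <;>
    simp [blkM, Matrix.one_apply, Prod.ext_iff, hpq]

def Um (n : ℕ) : Matrix (Fin n × Fin 2) (Fin n × Fin 2) R :=
  blkM (fun p q => if p = q then uu else 0)

lemma Um_mul_blkM (g : Fin n → Fin n → Matrix (Fin 2) (Fin 2) R) :
    (Um n : Matrix _ _ R) * blkM g = blkM (fun p q => uu * g p q) := by
  rw [Um, blkM_mul]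
  refine congrArg blkM (funext fun p => funext fun q => ?_)
  rw [Finset.sum_eq_single p]
  · simp
  · intro b _ hb; simp [Ne.symm hb]
  · intro h; exact absurd (Finset.mem_univ p) h

lemma blkM_mul_Um (g : Fin n → Fin n → Matrix (Fin 2) (Fin 2) R) :
    blkM g * (Um n : Matrix _ _ R) = blkM (fun p q => g p q * uu) := by
  rw [Um, blkM_mul]
  refine congrArg blkM (funext fun p => funext fun q => ?_)
  rw [Finset.sum_eq_single q]
  · simp
  · intro b _ hb; simp [hb]
  · intro h; exact absurd (Finset.mem_univ q) h

lemma uu_mul_uu : (uu : Matrix (Fin 2) (Fin 2) R) * uu = -1 := by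
  ext i j
  fin_cases i <;> fin_cases j <;>
    simp [uu, Matrix.mul_apply, Fin.sum_univ_two, Matrix.one_apply]

lemma uu_transpose : (uu : Matrix (Fin 2) (Fin 2) R)ᵀ = -uu := by
  ext i j
  fin_cases i <;> fin_cases j <;> simp [uu]

lemma Um_def : (Um n : Matrix _ _ R) = blkM (fun p q => if p = q then uu else 0) := rfl

lemma Um_mul_Um : (Um n : Matrix _ _ R) * Um n = -1 := by
  nth_rewrite 2 [Um_def]
  rw [Um_mul_blkM, ← blkM_one (n := n) (R := R), blkM_neg]
  refine congrArg blkM (funext fun p => funext fun q => ?_)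
  by_cases hpq : p = q <;> simp [hpq, uu_mul_uu]

lemma Um_transpose : (Um n : Matrix _ _ R)ᵀ = -Um n := by
  rw [Um, blkM_transpose, blkM_neg]
  refine congrArg blkM (funext fun p => funext fun q => ?_)
  by_cases hpq : p = q <;> simp [hpq, eq_comm, uu_transpose]

lemma Um_map (f : R →+* R') : (Um n : Matrix _ _ R).map f = Um n := by
  ext ⟨p, a⟩ ⟨q, b⟩
  by_cases hpq : p = q <;> fin_cases a <;> fin_cases b <;>
    simp [Um, blkM, uu, hpq, Matrix.map_apply]

lemma det_uu : (uu : Matrix (Fin 2) (Fin 2) R).det = 1 := by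
  simp [uu, Matrix.det_fin_two_of]

lemma Um_eq_kronecker :
    (Um n : Matrix _ _ R) = Matrix.kroneckerMap (· * ·) (1 : Matrix (Fin n) (Fin n) R) uu := by
  ext ⟨p, a⟩ ⟨q, b⟩
  by_cases hpq : p = q <;>
    simp [Um, blkM, Matrix.kroneckerMap_apply, Matrix.one_apply, hpq]

lemma det_Um : (Um n : Matrix _ _ R).det = 1 := by
  rw [Um_eq_kronecker]
  rw [Matrix.det_kronecker]
  simp [det_uu]

lemma pat_map (f : R →+* R') (im r x y z : R) :
    (pat im r x y z).map f = pat (f im) (f r) (f x) (f y) (f z) := by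
  ext i j
  fin_cases i <;> fin_cases j <;> simp [pat, Matrix.map_apply]

lemma pat_neg_im (im r x y z : R) :
    pat (-im) r x y z = -(uu * pat im r x y z * uu) := by
  ext i j
  fin_cases i <;> fin_cases j <;>
    simp [pat, uu, Matrix.mul_apply, Fin.sum_univ_two] <;> ring

lemma pat_star_u (q : Quaternion ℝ) :
    (quatToM2 (star q) * uu)ᵀ = -(quatToM2 q * uu) := by
  ext i j
  fin_cases i <;> fin_cases j <;>
    simp [quatToM2, uu, Matrix.mul_apply, Fin.sum_univ_two,
      Quaternion.re_star, Quaternion.imI_star, Quaternion.imJ_star, Quaternion.imK_star] <;>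
    ring

lemma quatToM2_one : quatToM2 1 = 1 := by
  ext i j
  fin_cases i <;> fin_cases j <;> simp [quatToM2, Matrix.one_apply, Quaternion.re_one, Quaternion.imI_one,
    Quaternion.imJ_one, Quaternion.imK_one]

lemma quatToM2_zero : quatToM2 0 = 0 := by
  ext i j
  fin_cases i <;> fin_cases j <;> simp [quatToM2, Quaternion.re_zero, Quaternion.imI_zero,
    Quaternion.imJ_zero, Quaternion.imK_zero]

end blk

section gen
variable (n : ℕ)

abbrev Rc (n : ℕ) := MvPolynomial (Fin n × Fin n × Fin 4) ℂ

/-- The generic complexified quaternionic matrix. -/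
noncomputable def Agen : Matrix (Fin n × Fin 2) (Fin n × Fin 2) (Rc n) :=
  blkM (fun p q => pat (C Complex.I) (X (p, q, 0)) (X (p, q, 1)) (X (p, q, 2)) (X (p, q, 3)))

noncomputable def Sgen : Matrix (Fin n × Fin 2) (Fin n × Fin 2) (Rc n) :=
  Agen n * Um n - (Agen n * Um n)ᵀ

lemma Sgen_transpose : (Sgen n)ᵀ = -(Sgen n) := by
  rw [Sgen, Matrix.transpose_sub, Matrix.transpose_transpose, neg_sub]

/-- coefficientwise conjugation -/
noncomputable def cc (n : ℕ) : Rc n →+* Rc n := MvPolynomial.map (starRingEnd ℂ)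

lemma Agen_conj : (Agen n).map (cc n) = -((Um n : Matrix _ _ (Rc n)) * Agen n * Um n) := by
  rw [Agen, blkM_map, Matrix.mul_assoc, blkM_mul_Um, Um_mul_blkM, blkM_neg]
  refine congrArg blkM (funext fun p => funext fun q => ?_)
  rw [pat_map]
  have h1 : (cc n) (C Complex.I) = -(C Complex.I) := by
    simp [cc, MvPolynomial.map_C, Complex.conj_I]
  have h2 : ∀ s, (cc n) (X s : Rc n) = X s := by
    intro s; simp [cc, MvPolynomial.map_X]
  rw [h1, h2, h2, h2, h2, pat_neg_im, Matrix.mul_assoc]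


lemma Um_conj : (Um n : Matrix _ _ (Rc n)).map (cc n) = Um n := Um_map _

lemma Sgen_conj : (Sgen n).map (cc n) = (Um n)ᵀ * Sgen n * (Um n : Matrix _ _ (Rc n)) := by
  have hUU : (Um n : Matrix _ _ (Rc n)) * Um n = -1 := Um_mul_Um
  have hUt : (Um n : Matrix _ _ (Rc n))ᵀ = -(Um n) := Um_transpose
  have hmap : (Sgen n).map (cc n)
      = (Um n : Matrix _ _ (Rc n)) * Agen n - ((Um n : Matrix _ _ (Rc n)) * Agen n)ᵀ := by
    rw [Sgen]
    have hsub : ∀ X Y : Matrix (Fin n × Fin 2) (Fin n × Fin 2) (Rc n),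
        (X - Y).map (cc n) = X.map (cc n) - Y.map (cc n) :=
      fun X Y => map_sub ((cc n).mapMatrix) X Y
    rw [hsub, Matrix.transpose_map, Matrix.map_mul, Agen_conj, Um_conj]
    have e1 : -((Um n : Matrix _ _ (Rc n)) * Agen n * Um n) * Um n = Um n * Agen n := by
      rw [Matrix.neg_mul, Matrix.mul_assoc, Matrix.mul_assoc, hUU]
      simp [Matrix.mul_neg]
    rw [e1]
  rw [hmap, Sgen, hUt]
  rw [Matrix.transpose_mul, hUt]
  rw [Matrix.transpose_mul, hUt]
  have hUUX : ∀ Z : Matrix (Fin n × Fin 2) (Fin n × Fin 2) (Rc n),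
      Um n * (Um n * Z) = -Z := by
    intro Z; rw [← Matrix.mul_assoc, hUU]; exact neg_one_mul Z
  have hXUU : ∀ Z : Matrix (Fin n × Fin 2) (Fin n × Fin 2) (Rc n),
      Z * (Um n * Um n) = -Z := by
    intro Z; rw [hUU]; exact mul_neg_one Z
  simp only [Matrix.mul_sub, Matrix.sub_mul, Matrix.mul_add, Matrix.add_mul, Matrix.mul_neg,
    Matrix.neg_mul, neg_neg, Matrix.mul_assoc, sub_neg_eq_add]
  rw [hXUU, hUUX]
  simp only [Matrix.mul_neg, neg_neg]

lemma det_Um_Rc : (Um n : Matrix _ _ (Rc n)).det = 1 := det_Um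

lemma det_Sgen_conj : (cc n) (Sgen n).det = (Sgen n).det := by
  rw [RingHom.map_det, RingHom.mapMatrix_apply, Sgen_conj, Matrix.det_mul, Matrix.det_mul,
    Matrix.det_transpose, det_Um_Rc]
  ring

end gen

section sq

variable (n : ℕ)

lemma isSquare_det_Sgen : IsSquare (Sgen n).det := by
  classical
  set K := FractionRing (Rc n) with hK
  letI : CharZero K := charZero_of_injective_algebraMap (IsFractionRing.injective (Rc n) K)
  have h2 : (2 : K) ≠ 0 := two_ne_zero
  set φ := algebraMap (Rc n) K with hφ
  set Sk := (Sgen n).map φ with hSk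
  have hSkT : Skᵀ = -Sk := by
    rw [hSk, ← Matrix.transpose_map, Sgen_transpose]
    exact map_neg (φ.mapMatrix) _
  set e : Fin (n*2) ≃ (Fin n × Fin 2) := finProdFinEquiv.symm with he
  set S2 := Sk.submatrix e e with hS2
  have hS2T : S2ᵀ = -S2 := by
    ext i j
    have := congrFun (congrFun hSkT (e i)) (e j)
    simpa [hS2, Matrix.transpose_apply, Matrix.submatrix_apply] using this
  have hsq := det_skew_isSquare' h2 (n*2) S2 hS2T
  rw [hS2, Matrix.det_submatrix_equiv_self] at hsq
  rw [hSk, ← RingHom.mapMatrix_apply, ← RingHom.map_det, hφ] at hsq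
  exact isSquare_of_fractionRing' _ hsq

noncomputable def EVM (M : Matrix (Fin n) (Fin n) (Quaternion ℝ)) : Rc n →+* ℂ :=
  MvPolynomial.eval (fun s => (entriesR M s : ℂ))

lemma eval_Agen (M : Matrix (Fin n) (Fin n) (Quaternion ℝ)) :
    (Agen n).map (EVM n M) = blkM (fun p q => quatToM2 (M p q)) := by
  rw [Agen, blkM_map]
  refine congrArg blkM (funext fun p => funext fun q => ?_)
  rw [pat_map, quatToM2_eq_pat]
  have h0 : (EVM n M) (C Complex.I) = Complex.I := by simp [EVM]
  have h1 : (EVM n M) (X (p,q,0)) = ((M p q).re : ℂ) := by simp [EVM, entriesR]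
  have h2 : (EVM n M) (X (p,q,1)) = ((M p q).imI : ℂ) := by simp [EVM, entriesR]
  have h3 : (EVM n M) (X (p,q,2)) = ((M p q).imJ : ℂ) := by simp [EVM, entriesR]
  have h4 : (EVM n M) (X (p,q,3)) = ((M p q).imK : ℂ) := by simp [EVM, entriesR]
  rw [h0, h1, h2, h3, h4]

lemma eval_Sgen (M : Matrix (Fin n) (Fin n) (Quaternion ℝ)) (hM : QHerm M) :
    (Sgen n).map (EVM n M)
      = (2:ℂ) • (blkM (fun p q => quatToM2 (M p q)) * (Um n : Matrix _ _ ℂ)) := by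
  have hsub : ∀ X Y : Matrix (Fin n × Fin 2) (Fin n × Fin 2) (Rc n),
      (X - Y).map (EVM n M) = X.map (EVM n M) - Y.map (EVM n M) :=
    fun X Y => map_sub ((EVM n M).mapMatrix) X Y
  rw [Sgen, hsub, Matrix.transpose_map, Matrix.map_mul, eval_Agen, Um_map]
  have hNU : (blkM (fun p q => quatToM2 (M p q)) * (Um n : Matrix _ _ ℂ))ᵀ
      = -(blkM (fun p q => quatToM2 (M p q)) * (Um n : Matrix _ _ ℂ)) := by
    rw [blkM_mul_Um, blkM_transpose, blkM_neg]
    refine congrArg blkM (funext fun p => funext fun q => ?_)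
    have : M q p = star (M p q) := by rw [← hM p q, star_star]
    rw [this, pat_star_u]
  rw [hNU, sub_neg_eq_add, two_smul]

lemma det_eval_Sgen (M : Matrix (Fin n) (Fin n) (Quaternion ℝ)) (hM : QHerm M) :
    (EVM n M) (Sgen n).det = 2^(n*2) * Nrd M := by
  rw [RingHom.map_det, RingHom.mapMatrix_apply, eval_Sgen n M hM, Matrix.det_smul,
    Matrix.det_mul, det_Um]
  have hcard : Fintype.card (Fin n × Fin 2) = n*2 := by simp
  have hNrd : Nrd M = (blkM fun p q => quatToM2 (M p q)).det := rfl
  rw [hcard, hNrd]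
  ring

lemma QHerm_one : QHerm (1 : Matrix (Fin n) (Fin n) (Quaternion ℝ)) := by
  intro i j
  by_cases h : i = j
  · subst h; simp
  · simp [Matrix.one_apply, h, Ne.symm h]

lemma Nrd_one : Nrd (1 : Matrix (Fin n) (Fin n) (Quaternion ℝ)) = 1 := by
  have h : (Matrix.of fun p q : Fin n × Fin 2 =>
      quatToM2 ((1 : Matrix (Fin n) (Fin n) (Quaternion ℝ)) p.1 q.1) p.2 q.2)
      = (1 : Matrix (Fin n × Fin 2) (Fin n × Fin 2) ℂ) := by
    ext ⟨p,a⟩ ⟨q,b⟩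
    by_cases hpq : p = q <;>
      simp [Matrix.one_apply, Prod.ext_iff, hpq, quatToM2_one, quatToM2_zero]
  rw [Nrd, h, Matrix.det_one]

lemma map_eval_ofReal {σ : Type*} (v : σ → ℝ) (t : MvPolynomial σ ℝ) :
    MvPolynomial.eval (fun s => ((v s : ℝ) : ℂ)) (MvPolynomial.map Complex.ofRealHom t)
      = ((MvPolynomial.eval v t : ℝ) : ℂ) := by
  induction t using MvPolynomial.induction_on with
  | C a => simp
  | add p q hp hq => simp [hp, hq]
  | mul_X p s hp => simp [hp]

lemma EVM_map_ofReal (M : Matrix (Fin n) (Fin n) (Quaternion ℝ))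
    (t : MvPolynomial (Fin n × Fin n × Fin 4) ℝ) :
    EVM n M (MvPolynomial.map Complex.ofRealHom t)
      = ((MvPolynomial.eval (entriesR M) t : ℝ) : ℂ) :=
  map_eval_ofReal (entriesR M) t

end sq

end MoorePf


/-- Moore/Tignol: for a quaternionic Hermitian matrix, the reduced norm (determinant of the
complex image) is the square of a polynomial (the pfaffian norm / Moore determinant) in the
real entries, normalized so that the identity matrix has pfaffian norm `1`. -/
theorem stmt0 (n : ℕ) :
    ∃ P : MvPolynomial (Fin n × Fin n × Fin 4) ℝ,
      eval (entriesR (1 : Matrix (Fin n) (Fin n) (Quaternion ℝ))) P = 1 ∧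
      ∀ M : Matrix (Fin n) (Fin n) (Quaternion ℝ), QHerm M →
        Nrd M = (((eval (entriesR M) P : ℝ) : ℂ)) ^ 2 := by
  classical
  obtain ⟨r, hr⟩ := MoorePf.isSquare_det_Sgen n
  have hccr : MoorePf.cc n r = r ∨ MoorePf.cc n r = -r := by
    have h : (MoorePf.cc n) r * (MoorePf.cc n) r = r * r := by
      rw [← _root_.map_mul, ← hr, MoorePf.det_Sgen_conj, hr]
    exact mul_self_eq_mul_self_iff.mp h
  have hkey : ∀ M : Matrix (Fin n) (Fin n) (Quaternion ℝ), QHerm M →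
      ((MoorePf.EVM n M) r) * ((MoorePf.EVM n M) r) = 2^(n*2) * Nrd M := by
    intro M hM
    rw [← _root_.map_mul, ← hr, MoorePf.det_eval_Sgen n M hM]
  rcases hccr with hcc | hcc
  · obtain ⟨t, ht⟩ := exists_real_of_conj_fixed' r hcc
    set s : ℝ := eval (entriesR (1 : Matrix (Fin n) (Fin n) (Quaternion ℝ))) t with hs
    have h1 : ((s:ℂ)) * (s:ℂ) = 2^(n*2) := by
      have h := hkey 1 (MoorePf.QHerm_one n)
      rw [← ht, MoorePf.EVM_map_ofReal, MoorePf.Nrd_one, mul_one] at h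
      rw [hs]
      exact h
    have hsne : s ≠ 0 := by
      intro h
      rw [h] at h1
      have h2 : (2:ℂ)^(n*2) ≠ 0 := pow_ne_zero _ two_ne_zero
      simp at h1
      exact h2 h1.symm
    refine ⟨MvPolynomial.C s⁻¹ * t, ?_, ?_⟩
    · rw [_root_.map_mul, eval_C, ← hs, inv_mul_cancel₀ hsne]
    · intro M hM
      have hM2 := hkey M hM
      rw [← ht, MoorePf.EVM_map_ofReal] at hM2
      set y : ℝ := eval (entriesR M) t with hy
      rw [_root_.map_mul, eval_C, ← hy]
      have hs2 : (s:ℂ) ≠ 0 := by exact_mod_cast hsne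
      have key2 : ((s:ℂ))^2 * Nrd M = ((y:ℂ))^2 := by
        rw [sq, sq]
        linear_combination Nrd M * h1 - hM2
      have hcast : (((s⁻¹ * y : ℝ) : ℂ)) = (s:ℂ)⁻¹ * (y:ℂ) := by push_cast; ring
      rw [hcast, mul_pow, ← key2, ← mul_assoc, ← mul_pow, inv_mul_cancel₀ hs2, one_pow, one_mul]
  · exfalso
    have hfix : MoorePf.cc n (MvPolynomial.C Complex.I * r) = MvPolynomial.C Complex.I * r := by
      rw [_root_.map_mul, hcc]
      have : (MoorePf.cc n) (MvPolynomial.C Complex.I) = -MvPolynomial.C Complex.I := by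
        simp [MoorePf.cc, MvPolynomial.map_C, Complex.conj_I]
      rw [this]
      ring
    obtain ⟨t, ht⟩ := exists_real_of_conj_fixed' (MvPolynomial.C Complex.I * r) hfix
    have h1 := hkey 1 (MoorePf.QHerm_one n)
    rw [MoorePf.Nrd_one, mul_one] at h1
    set w : ℝ := eval (entriesR (1 : Matrix (Fin n) (Fin n) (Quaternion ℝ))) t with hw
    have h2 : (w:ℂ) = Complex.I * (MoorePf.EVM n 1) r := by
      rw [← MoorePf.EVM_map_ofReal n 1 t, ht, _root_.map_mul]
      simp [MoorePf.EVM]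
    have h4 : (w:ℂ) * w = -(2^(n*2)) := by
      rw [h2]
      calc (Complex.I * (MoorePf.EVM n 1) r) * (Complex.I * (MoorePf.EVM n 1) r)
          = (Complex.I * Complex.I) * ((MoorePf.EVM n 1) r * (MoorePf.EVM n 1) r) := by ring
        _ = -(2^(n*2)) := by rw [Complex.I_mul_I, h1]; ring
    have h5 : w * w = -(2^(n*2) : ℝ) := by exact_mod_cast h4
    nlinarith [mul_self_nonneg w, pow_pos (by norm_num : (0:ℝ) < 2) (n*2)]
end

section
/- For the 2×2 quaternionic Hermitian matrix N with entries N₁₁ = Σₑ Aₑ, N₁₂ = Σₑ Aₑμₑ, N₂₁ = Σₑ Aₑμ̄ₑ, N₂₂ = Σₑ Aₑμ̄ₑμₑ, where Aₑ are real scalars and μₑ quaternions, the Moore determinant equals Nrp(N) = Σ_{i<j} (μᵢ−μⱼ)‾(μᵢ−μⱼ) A_i A_j = (Σ Aₑ)(Σ Aₑ μ̄ₑ μₑ) − (Σ Aₑ μ̄ₑ)(Σ Aₑ μₑ). -/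
lemma swap_sum {M : Type*} [AddCommMonoid M] (n : ℕ) (h : Fin n → Fin n → M) :
    ∑ i, ∑ j ∈ Finset.Iio i, h i j = ∑ i, ∑ j ∈ Finset.Ioi i, h j i := by
  rw [Finset.sum_sigma', Finset.sum_sigma']
  apply Finset.sum_nbij' (fun p => ⟨p.2, p.1⟩) (fun p => ⟨p.2, p.1⟩) <;>
    simp [Finset.mem_Iio, Finset.mem_Ioi]

lemma pair_split {M : Type*} [AddCommMonoid M] (n : ℕ) (g : Fin n → Fin n → M)
    (hdiag : ∀ i, g i i = 0) :
    ∑ i, ∑ j, g i j = ∑ i, ∑ j ∈ Finset.Ioi i, (g i j + g j i) := by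
  have huniv : ∀ i : Fin n, (Finset.univ : Finset (Fin n))
      = insert i (Finset.Iio i ∪ Finset.Ioi i) := by
    intro i; ext j; rcases lt_trichotomy j i with h|h|h
    · simp [h, h.ne]
    · simp [h]
    · simp [h, h.ne']
  have h1 : ∀ i : Fin n, ∑ j, g i j
      = ∑ j ∈ Finset.Iio i, g i j + ∑ j ∈ Finset.Ioi i, g i j := by
    intro i
    rw [huniv i, Finset.sum_insert (by simp [lt_irrefl]), hdiag, zero_add,
      Finset.sum_union (by simp [Finset.disjoint_left]; intro a h; exact le_of_lt h)]
  simp only [h1, Finset.sum_add_distrib, swap_sum]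
  exact add_comm _ _


/-- The Moore determinant of the 2×2 quaternionic Hermitian matrix
`[[Σ Aₑ, Σ Aₑμₑ], [Σ Aₑμ̄ₑ, Σ Aₑμ̄ₑμₑ]]` (namely `ad − b̄b` for `[[a,b],[b̄,d]]` with `a, d`
real) equals `Σ_{i<j} (μᵢ−μⱼ)‾(μᵢ−μⱼ) AᵢAⱼ`. -/
theorem stmt3 (n : ℕ) (A : Fin n → ℝ) (μ : Fin n → Quaternion ℝ) :
    (∑ e, A e) • (∑ e, A e • (star (μ e) * μ e))
      - (∑ e, A e • star (μ e)) * (∑ e, A e • μ e)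
      = ∑ i, ∑ j ∈ Finset.Ioi i, (A i * A j) • (star (μ i - μ j) * (μ i - μ j)) := by
  have hlhs : (∑ e, A e) • (∑ e, A e • (star (μ e) * μ e))
      - (∑ e, A e • star (μ e)) * (∑ e, A e • μ e)
      = ∑ i, ∑ j, ((A i * A j) • (star (μ j) * μ j)
          - (A i • star (μ i)) * (A j • μ j)) := by
    rw [Finset.sum_smul, Finset.sum_mul_sum, ← Finset.sum_sub_distrib]
    refine Finset.sum_congr rfl fun i _ => ?_
    rw [Finset.smul_sum, ← Finset.sum_sub_distrib]
    refine Finset.sum_congr rfl fun j _ => ?_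
    rw [smul_smul]
  rw [hlhs, pair_split]
  · refine Finset.sum_congr rfl fun i _ => ?_
    refine Finset.sum_congr rfl fun j _ => ?_
    simp only [star_sub, sub_mul, mul_sub, smul_sub, smul_mul_smul_comm, smul_smul,
      mul_comm (A j) (A i)]
    abel
  · intro i
    rw [smul_mul_smul_comm]
    abel
end

section
/- Let H be an n-dimensional quaternionic subspace of A^p (column vectors over the quaternions A, viewed as a right A-module), with basis vectors α₁,…,α_n, giving a p×n quaternionic matrix (a_{ij}). For each j let e_j^∨ = (a_{j1},…,a_{jn}) and x_j = (e_j^∨)* e_j^∨. Then the configuration polynomial Φ_H(A₁,…,A_p) = Nrp(Σⱼ Aⱼ xⱼ) has degree at most 1 in each variable Aᵢ. -/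
open MvPolynomial

theorem quatToM2_mul (q r : Quaternion ℝ) :
    quatToM2 (q * r) = quatToM2 q * quatToM2 r := by
  ext s u
  fin_cases s <;> fin_cases u <;>
    simp [quatToM2, Matrix.mul_apply, Fin.sum_univ_two, Quaternion.re_mul,
      Quaternion.imI_mul, Quaternion.imJ_mul, Quaternion.imK_mul, Complex.ext_iff] <;>
    ring_nf <;> simp

theorem quatToM2_addsmul (t : ℝ) (q r : Quaternion ℝ) :
    quatToM2 (t • q + r) = (t : ℂ) • quatToM2 q + quatToM2 r := by
  ext s u
  fin_cases s <;> fin_cases u <;>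
    simp [quatToM2, Complex.ext_iff] <;> ring_nf <;> simp

open Polynomial in
theorem natDegree_det_le {ι : Type*} [Fintype ι] [DecidableEq ι]
    (N : Matrix ι ι (Polynomial ℂ)) (d : ι → ℕ)
    (h : ∀ i j, (N i j).natDegree ≤ d i) :
    N.det.natDegree ≤ ∑ i, d i := by
  rw [Matrix.det_apply']
  refine Polynomial.natDegree_sum_le_of_forall_le _ _ fun σ _ => ?_
  refine (Polynomial.natDegree_mul_le).trans ?_
  rw [Polynomial.natDegree_intCast, zero_add]
  refine (Polynomial.natDegree_prod_le _ _).trans ?_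
  calc ∑ i, (N (σ i) i).natDegree ≤ ∑ i, d (σ i) :=
        Finset.sum_le_sum fun i _ => h (σ i) i
    _ = ∑ i, d i := Equiv.sum_comp σ d

open Polynomial in
theorem det_affine_deg_two {ι : Type*} [Fintype ι] [DecidableEq ι]
    (C0 : Matrix ι ι ℂ) (V : Matrix ι (Fin 2) ℂ) (W : Matrix (Fin 2) ι ℂ) :
    ∃ q : Polynomial ℂ, q.natDegree ≤ 2 ∧
      ∀ z : ℂ, q.eval z = (C0 + z • (V * W)).det := by
  set N : Matrix (ι ⊕ Fin 2) (ι ⊕ Fin 2) (Polynomial ℂ) :=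
    Matrix.fromBlocks (C0.map Polynomial.C) (V.map Polynomial.C)
      (-((X : ℂ[X]) • W.map Polynomial.C)) 1 with hN
  refine ⟨N.det, ?_, ?_⟩
  · have := natDegree_det_le N (Sum.elim (fun _ => 0) (fun _ => 1)) ?_
    · simpa [Fintype.sum_sum_type] using this
    · rintro (i | i) (j | j) <;>
        simp only [hN, Matrix.fromBlocks_apply₁₁, Matrix.fromBlocks_apply₁₂,
          Matrix.fromBlocks_apply₂₁, Matrix.fromBlocks_apply₂₂, Sum.elim_inl, Sum.elim_inr,
          Matrix.map_apply, Matrix.neg_apply, Matrix.smul_apply, smul_eq_mul,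
          Polynomial.natDegree_neg]
      · simp
      · simp
      · exact (Polynomial.natDegree_mul_le).trans (by simp)
      · rcases eq_or_ne i j with rfl | hij
        · simp [Matrix.one_apply_eq]
        · simp [Matrix.one_apply_ne hij]
  · intro z
    have hdet : (N.map (Polynomial.evalRingHom z)).det = Polynomial.eval z N.det := by
      exact ((RingHom.map_det (Polynomial.evalRingHom z) N).symm : _)
    have hmap : N.map (Polynomial.evalRingHom z) =
        Matrix.fromBlocks C0 V (-(z • W)) 1 := by
      ext (i | i) (j | j) <;>
        simp [hN, Matrix.fromBlocks, Matrix.one_apply, apply_ite] <;> ring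
    rw [← hdet, hmap, Matrix.det_fromBlocks_one₂₂]
    congr 1
    rw [Matrix.mul_neg, sub_neg_eq_add, Matrix.mul_smul]

open MvPolynomial in
theorem eval_affine_poly {σ : Type*} (P : MvPolynomial σ ℝ) (u w : σ → ℝ) :
    ∃ f : Polynomial ℝ, ∀ t : ℝ,
      f.eval t = eval (fun v => t * u v + w v) P := by
  refine ⟨MvPolynomial.aeval
    (fun v => Polynomial.C (w v) + Polynomial.C (u v) * Polynomial.X) P, fun t => ?_⟩
  have : (Polynomial.evalRingHom t).comp
      ((MvPolynomial.aeval (fun v : σ =>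
        Polynomial.C (w v) + Polynomial.C (u v) * Polynomial.X)).toRingHom)
      = (MvPolynomial.eval (fun v => t * u v + w v) : MvPolynomial σ ℝ →+* ℝ) := by
    apply MvPolynomial.ringHom_ext <;> intro x <;> simp [RingHom.comp_apply] <;> ring
  exact congrFun (congrArg (fun g : MvPolynomial σ ℝ →+* ℝ => (g : _ → _)) this) P

/-- The configuration polynomial `Φ_H(A₁,…,A_p) = Nrp(Σⱼ Aⱼ xⱼ)` of an `n`-dimensional
quaternionic subspace `H ⊆ A^p` with (right-linearly independent) basis given by the columns
of the `p × n` matrix `a`, where `xⱼ = (eⱼ^∨)* eⱼ^∨` with `eⱼ^∨` the `j`-th row of `a`,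
has degree at most `1` in each variable `Aᵢ`. (The Moore determinant `Nrp` is given by any
polynomial `P` with the defining properties `P(I) = 1` and `P² = Nrd` on Hermitian
matrices.) -/
theorem stmt5 (p n : ℕ) (a : Fin p → Fin n → Quaternion ℝ)
    (hindep : ∀ c : Fin n → Quaternion ℝ, (∀ e : Fin p, ∑ i, a e i * c i = 0) → c = 0)
    (P : MvPolynomial (Fin n × Fin n × Fin 4) ℝ)
    (hP1 : eval (entriesR (1 : Matrix (Fin n) (Fin n) (Quaternion ℝ))) P = 1)
    (hP : ∀ B : Matrix (Fin n) (Fin n) (Quaternion ℝ), QHerm B →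
      Nrd B = (((eval (entriesR B) P : ℝ) : ℂ)) ^ 2)
    (Φ : (Fin p → ℝ) → ℝ)
    (hΦ : ∀ A : Fin p → ℝ,
      Φ A = eval (entriesR (Matrix.of fun k l : Fin n =>
        ∑ j, A j • (star (a j k) * a j l))) P) :
    ∀ (i : Fin p) (A : Fin p → ℝ), ∃ c d : ℝ, ∀ t : ℝ,
      Φ (Function.update A i t) = c * t + d := by
  intro i A
  classical
  set Xi : Matrix (Fin n) (Fin n) (Quaternion ℝ) :=
    Matrix.of fun k l => star (a i k) * a i l with hXi
  set B : Matrix (Fin n) (Fin n) (Quaternion ℝ) :=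
    Matrix.of fun k l => ∑ j, (if j = i then 0 else A j) • (star (a j k) * a j l) with hB
  have hM : ∀ t : ℝ, (Matrix.of fun k l : Fin n =>
      ∑ j, (Function.update A i t j) • (star (a j k) * a j l)) = t • Xi + B := by
    intro t
    refine Matrix.ext fun k l => ?_
    simp only [Matrix.of_apply, Matrix.add_apply, Matrix.smul_apply, hXi, hB]
    have h1 : ∀ j : Fin p, (Function.update A i t j) • (star (a j k) * a j l)
        = (if j = i then t • (star (a i k) * a i l) else 0)
          + (if j = i then 0 else A j) • (star (a j k) * a j l) := by
      intro j
      rcases eq_or_ne j i with rfl | h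
      · simp
      · simp [Function.update_of_ne h, h]
    rw [Finset.sum_congr rfl fun j _ => h1 j, Finset.sum_add_distrib,
      Finset.sum_ite_eq' Finset.univ i, if_pos (Finset.mem_univ i)]
  have hsmul : ∀ (r : ℝ) (x : Quaternion ℝ), star (r • x) = r • star x := by
    intro r x
    ext <;> simp
  have hHerm : ∀ t : ℝ, QHerm (t • Xi + B) := by
    intro t k l
    simp only [Matrix.add_apply, Matrix.smul_apply, hXi, hB, Matrix.of_apply, star_add,
      hsmul, star_sum, star_mul, star_star, star_trivial]
  have hentries : ∀ t : ℝ, entriesR (t • Xi + B) =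
      fun v => t * entriesR Xi v + entriesR B v := by
    intro t
    funext v
    obtain ⟨k, l, s⟩ := v
    fin_cases s <;>
      simp [entriesR, Quaternion.re_add, Quaternion.imI_add, Quaternion.imJ_add,
        Quaternion.imK_add, Quaternion.re_smul, Quaternion.imI_smul, Quaternion.imJ_smul,
        Quaternion.imK_smul, smul_eq_mul]
  obtain ⟨f, hf⟩ := eval_affine_poly P (entriesR Xi) (entriesR B)
  have hft : ∀ t : ℝ, f.eval t = Φ (Function.update A i t) := by
    intro t
    rw [hΦ, hM t, hentries t]
    exact hf t
  set V : Matrix (Fin n × Fin 2) (Fin 2) ℂ :=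
    Matrix.of fun km m => quatToM2 (star (a i km.1)) km.2 m with hV
  set W : Matrix (Fin 2) (Fin n × Fin 2) ℂ :=
    Matrix.of fun m lu => quatToM2 (a i lu.1) m lu.2 with hW
  set C0 : Matrix (Fin n × Fin 2) (Fin n × Fin 2) ℂ :=
    Matrix.of fun pq qq => quatToM2 (B pq.1 qq.1) pq.2 qq.2 with hC0
  obtain ⟨q, hq2, hqe⟩ := det_affine_deg_two C0 V W
  have hNrd : ∀ t : ℝ, Nrd (t • Xi + B) = q.eval (t : ℂ) := by
    intro t
    rw [hqe]
    unfold Nrd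
    congr 1
    ext pq qq
    obtain ⟨k, s⟩ := pq; obtain ⟨l, u⟩ := qq
    have : (t • Xi + B) k l = t • (Xi k l) + B k l := rfl
    rw [Matrix.of_apply, this, quatToM2_addsmul, hXi]
    have h2 : quatToM2 (Matrix.of (fun k l => star (a i k) * a i l) k l)
        = quatToM2 (star (a i k)) * quatToM2 (a i l) := by
      rw [Matrix.of_apply, quatToM2_mul]
    rw [h2]
    simp [Matrix.mul_apply, hV, hW, hC0, Finset.mul_sum]
    ring
  have key : ∀ t : ℝ, ((f.eval t : ℝ) : ℂ) ^ 2 = q.eval (t : ℂ) := by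
    intro t
    have h3 : MvPolynomial.eval (entriesR (t • Xi + B)) P = f.eval t := by
      rw [hentries t]; exact (hf t).symm
    rw [← hNrd t, hP _ (hHerm t), h3]
  set F : Polynomial ℂ := f.map Complex.ofRealHom with hF
  have hFeval : ∀ t : ℝ, F.eval (t : ℂ) = ((f.eval t : ℝ) : ℂ) := by
    intro t
    rw [hF, Polynomial.eval_map]
    exact Polynomial.eval₂_at_apply Complex.ofRealHom t
  have hF2 : F ^ 2 = q := by
    have h0 : F ^ 2 - q = 0 := by
      refine Polynomial.eq_zero_of_infinite_isRoot _ ?_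
      refine Set.Infinite.mono ?_
        (Set.infinite_range_of_injective Complex.ofReal_injective)
      rintro z ⟨t, rfl⟩
      simp [Polynomial.IsRoot, hFeval t, key t]
    exact sub_eq_zero.mp h0
  have hinj : Function.Injective (Complex.ofRealHom : ℝ →+* ℂ) :=
    fun _ _ h => Complex.ofReal_injective h
  have hdegF : F.natDegree ≤ 1 := by
    rcases eq_or_ne F 0 with h0 | h0
    · simp [h0]
    · have h2 : (F ^ 2).natDegree = 2 * F.natDegree := by
        rw [pow_two, Polynomial.natDegree_mul h0 h0, two_mul]
      have := hq2
      rw [← hF2, h2] at this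
      omega
  have hdegf : f.natDegree ≤ 1 := by
    have := Polynomial.natDegree_map_eq_of_injective hinj f
    rw [← hF] at this
    omega
  refine ⟨f.coeff 1, f.coeff 0, fun t => ?_⟩
  rw [← hft t, Polynomial.eval_eq_sum_range' (lt_of_le_of_lt hdegf one_lt_two) t,
    show (2 : ℕ) = 1 + 1 from rfl, Finset.sum_range_succ _ 1, Finset.sum_range_succ _ 0,
    Finset.sum_range_zero]
  ring
end

section
/- Let p₁,…,p_{r+2} be vectors in ℂ^r with the standard bilinear form, and for each i,j set M(0)_{ij} = (pᵢ−pⱼ)·(pᵢ−pⱼ). If M(0) is invertible, then (M(0)^{-1}·𝟙)·𝟙 = 0, where 𝟙 = (1,1,…,1) ∈ ℂ^{r+2}. -/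
/-- For `p₁, …, p_{r+2}` in `ℂ^r` with the standard bilinear form, and
`M₀(i,j) = (pᵢ−pⱼ)·(pᵢ−pⱼ)`: if `M₀` is invertible then `(M₀⁻¹ 𝟙) · 𝟙 = 0`, where
`𝟙 = (1,…,1)`. -/
theorem stmt6 (r : ℕ) (p : Fin (r + 2) → Fin r → ℂ)
    (M : Matrix (Fin (r + 2)) (Fin (r + 2)) ℂ)
    (hM : ∀ i j, M i j = ∑ k, (p i k - p j k) ^ 2)
    (hinv : IsUnit M) :
    ∑ i, M⁻¹.mulVec (fun _ => (1 : ℂ)) i = 0 := by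
  classical
  set a : Fin (r + 2) → ℂ := fun i => ∑ m, (p i m) ^ 2 with ha
  let φ : (Fin (r + 2) → ℂ) →ₗ[ℂ] ℂ × (Fin r → ℂ) :=
    LinearMap.prod
      { toFun := fun k => ∑ i, k i
        map_add' := by intro x y; simp [Finset.sum_add_distrib]
        map_smul' := by intro c x; simp [Finset.mul_sum] }
      (Matrix.mulVecLin (Matrix.of fun m i => p i m))
  have hnotinj : ¬ Function.Injective φ := by
    intro h
    have := LinearMap.finrank_le_finrank_of_injective h
    simp [Module.finrank_prod] at this
    omega
  obtain ⟨x, y, hxy, hne⟩ := Function.not_injective_iff.mp hnotinj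
  set k : Fin (r + 2) → ℂ := x - y with hk
  have hk0 : k ≠ 0 := sub_ne_zero.mpr hne
  have hφk : φ k = 0 := by rw [hk, map_sub, hxy, sub_self]
  have hsum : ∑ i, k i = 0 := congrArg Prod.fst hφk
  have hp : ∀ m, ∑ i, p i m * k i = 0 := by
    intro m
    have := congrFun (congrArg Prod.snd hφk) m
    simpa [φ, Matrix.mulVecLin, Matrix.mulVec, dotProduct] using this
  set c : ℂ := ∑ j, k j * a j with hc
  have hMk : M.mulVec k = fun _ => c := by
    funext i
    simp only [Matrix.mulVec, dotProduct, hM]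
    have step : ∀ j, (∑ m, (p i m - p j m) ^ 2) * k j =
        a i * k j - 2 * ∑ m, p i m * (p j m * k j) + k j * a j := by
      intro j
      simp only [ha, Finset.sum_mul, Finset.mul_sum]
      rw [← Finset.sum_sub_distrib, ← Finset.sum_add_distrib]
      exact Finset.sum_congr rfl fun m _ => by ring
    rw [Finset.sum_congr rfl fun j _ => step j]
    rw [Finset.sum_add_distrib, Finset.sum_sub_distrib, ← Finset.mul_sum, hsum, mul_zero]
    have hz : ∑ j, 2 * ∑ m, p i m * (p j m * k j) = 0 := by
      rw [← Finset.mul_sum, Finset.sum_comm]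
      have h1 : ∀ m, ∑ j, p i m * (p j m * k j) = 0 := fun m => by
        rw [← Finset.mul_sum, hp m, mul_zero]
      rw [Finset.sum_congr rfl fun m _ => h1 m]
      simp
    rw [hz]
    simp [hc]
  have hdet : IsUnit M.det := (Matrix.isUnit_iff_isUnit_det M).mp hinv
  have hMinvM : M⁻¹ * M = 1 := Matrix.nonsing_inv_mul M hdet
  have hcne : c ≠ 0 := by
    intro h0
    apply hk0
    have : M.mulVec k = 0 := by rw [hMk]; funext i; simp [h0]
    calc k = (M⁻¹ * M).mulVec k := by rw [hMinvM, Matrix.one_mulVec]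
      _ = M⁻¹.mulVec (M.mulVec k) := by rw [Matrix.mulVec_mulVec]
      _ = 0 := by rw [this, Matrix.mulVec_zero]
  have hones : M.mulVec (c⁻¹ • k) = fun _ => (1 : ℂ) := by
    rw [Matrix.mulVec_smul, hMk]
    funext i
    simp [smul_eq_mul, inv_mul_cancel₀ hcne]
  have hinvone : M⁻¹.mulVec (fun _ => (1 : ℂ)) = c⁻¹ • k := by
    rw [← hones, Matrix.mulVec_mulVec, hMinvM, Matrix.one_mulVec]
  rw [hinvone]
  simp [Pi.smul_apply, smul_eq_mul, ← Finset.mul_sum, hsum]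
end

section
/- Let r ≥ 1. There exist p₁,…,p_{r+2} ∈ ℂ^r such that the (r+2)×(r+2) matrix M(0) with entries M(0)_{ij} = (pᵢ−pⱼ)·(pᵢ−pⱼ) (standard bilinear form) has nonzero determinant. Consequently det M(0) ≠ 0 for generic choices of the pᵢ. -/
/-- The point configuration: `p i = eᵢ` for `i < r`, `p r = 0`, `p (r+1) = (2,2,…,2)`. -/
def stmt7pp (r : ℕ) : Fin (r + 2) → Fin r → ℂ := fun i k =>
  if (i : ℕ) = r then 0
  else if (i : ℕ) = r + 1 then 2
  else if (k : ℕ) = (i : ℕ) then 1 else 0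

/-- Closed form of the squared-distance matrix. -/
def stmt7mm (r : ℕ) : Fin (r + 2) → Fin (r + 2) → ℂ := fun i j =>
  if (i : ℕ) = (j : ℕ) then 0
  else if (i : ℕ) < r then
    (if (j : ℕ) < r then 2 else if (j : ℕ) = r then 1 else 4 * (r : ℂ) - 3)
  else if (i : ℕ) = r then
    (if (j : ℕ) < r then 1 else 4 * (r : ℂ))
  else
    (if (j : ℕ) < r then 4 * (r : ℂ) - 3 else 4 * (r : ℂ))

/-- `8r` times the inverse of `stmt7mm`. -/
def stmt7nn (r : ℕ) : Fin (r + 2) → Fin (r + 2) → ℂ := fun i j =>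
  if (i : ℕ) < r then
    (if (j : ℕ) < r then (if (i : ℕ) = (j : ℕ) then -12 - 4 * (r : ℂ) else -12)
     else if (j : ℕ) = r then 4 * (4 * (r : ℂ) - 3) else 4)
  else if (i : ℕ) = r then
    (if (j : ℕ) < r then 4 * (4 * (r : ℂ) - 3)
     else if (j : ℕ) = r then -(4 * (r : ℂ) - 3) ^ 2 else 5 - 4 * (r : ℂ))
  else
    (if (j : ℕ) < r then 4 else if (j : ℕ) = r then 5 - 4 * (r : ℂ) else -1)

lemma stmt7_sum_const (r : ℕ) (c : ℂ) : ∑ _k : Fin r, c = (r : ℂ) * c := by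
  simp [Finset.sum_const, Finset.card_univ, mul_comm]

lemma stmt7_sum_one (r : ℕ) (a : ℕ) (ha : a < r) (x z : ℂ) :
    ∑ k : Fin r, (if (k : ℕ) = a then x else z) = x + ((r : ℂ) - 1) * z := by
  have h : ∀ k : Fin r, (if (k : ℕ) = a then x else z)
      = z + (if k = (⟨a, ha⟩ : Fin r) then x - z else 0) := by
    intro k
    by_cases h : (k : ℕ) = a
    · rw [if_pos h, if_pos (Fin.ext h)]; ring
    · rw [if_neg h, if_neg (fun hh => h (congrArg Fin.val hh))]; ring
  rw [Finset.sum_congr rfl fun k _ => h k, Finset.sum_add_distrib, Finset.sum_const,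
    Finset.sum_ite_eq' Finset.univ _ (fun _ => x - z), if_pos (Finset.mem_univ _)]
  simp only [Finset.card_univ, Fintype.card_fin, nsmul_eq_mul]
  ring

lemma stmt7_sum_two (r : ℕ) (a b : ℕ) (ha : a < r) (hb : b < r) (hab : a ≠ b) (x y z : ℂ) :
    ∑ k : Fin r, (if (k : ℕ) = a then x else if (k : ℕ) = b then y else z)
      = x + y + ((r : ℂ) - 2) * z := by
  have h : ∀ k : Fin r, (if (k : ℕ) = a then x else if (k : ℕ) = b then y else z)
      = z + (if k = (⟨a, ha⟩ : Fin r) then x - z else 0)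
          + (if k = (⟨b, hb⟩ : Fin r) then y - z else 0) := by
    intro k
    by_cases h1 : (k : ℕ) = a
    · rw [if_pos h1, if_pos (Fin.ext h1),
        if_neg (fun hh => hab (h1 ▸ congrArg Fin.val hh))]
      ring
    · rw [if_neg h1, if_neg (fun hh => h1 (congrArg Fin.val hh))]
      by_cases h2 : (k : ℕ) = b
      · rw [if_pos h2, if_pos (Fin.ext h2)]; ring
      · rw [if_neg h2, if_neg (fun hh => h2 (congrArg Fin.val hh))]; ring
  rw [Finset.sum_congr rfl fun k _ => h k, Finset.sum_add_distrib, Finset.sum_add_distrib,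
    Finset.sum_const, Finset.sum_ite_eq' Finset.univ _ (fun _ => x - z),
    Finset.sum_ite_eq' Finset.univ _ (fun _ => y - z), if_pos (Finset.mem_univ _),
    if_pos (Finset.mem_univ _)]
  simp only [Finset.card_univ, Fintype.card_fin, nsmul_eq_mul]
  ring

lemma stmt7_Mform (r : ℕ) :
    (Matrix.of fun i j : Fin (r + 2) => ∑ k, (stmt7pp r i k - stmt7pp r j k) ^ 2)
      = Matrix.of (stmt7mm r) := by
  ext i j
  simp only [Matrix.of_apply]
  have hi2 := i.isLt
  have hj2 := j.isLt
  by_cases hij : (i : ℕ) = (j : ℕ)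
  · have : i = j := Fin.ext hij
    subst this
    simp [stmt7mm]
  · have hcases : ((i : ℕ) < r ∨ (i : ℕ) = r ∨ (i : ℕ) = r + 1) ∧
        ((j : ℕ) < r ∨ (j : ℕ) = r ∨ (j : ℕ) = r + 1) := by omega
    obtain ⟨hi | hi | hi, hj | hj | hj⟩ := hcases
    · -- both basis vectors, distinct
      have step : ∀ k : Fin r, (stmt7pp r i k - stmt7pp r j k) ^ 2
          = (if (k : ℕ) = (i : ℕ) then 1 else if (k : ℕ) = (j : ℕ) then 1 else 0) := by
        intro k
        simp only [stmt7pp]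
        split_ifs <;> first | (exfalso; omega) | norm_num | ring
      rw [Finset.sum_congr rfl fun k _ => step k, stmt7_sum_two r _ _ hi hj hij]
      simp only [stmt7mm]
      split_ifs <;> first | (exfalso; omega) | ring | norm_num
    · -- i basis, j = 0
      have step : ∀ k : Fin r, (stmt7pp r i k - stmt7pp r j k) ^ 2
          = (if (k : ℕ) = (i : ℕ) then 1 else 0) := by
        intro k
        simp only [stmt7pp]
        split_ifs <;> first | (exfalso; omega) | norm_num | ring
      rw [Finset.sum_congr rfl fun k _ => step k, stmt7_sum_one r _ hi]
      simp only [stmt7mm]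
      split_ifs <;> first | (exfalso; omega) | ring | norm_num
    · -- i basis, j = 2·𝟙
      have step : ∀ k : Fin r, (stmt7pp r i k - stmt7pp r j k) ^ 2
          = (if (k : ℕ) = (i : ℕ) then 1 else 4) := by
        intro k
        simp only [stmt7pp]
        split_ifs <;> first | (exfalso; omega) | norm_num | ring
      rw [Finset.sum_congr rfl fun k _ => step k, stmt7_sum_one r _ hi]
      simp only [stmt7mm]
      split_ifs <;> first | (exfalso; omega) | ring | norm_num
    · -- i = 0, j basis
      have step : ∀ k : Fin r, (stmt7pp r i k - stmt7pp r j k) ^ 2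
          = (if (k : ℕ) = (j : ℕ) then 1 else 0) := by
        intro k
        simp only [stmt7pp]
        split_ifs <;> first | (exfalso; omega) | norm_num | ring
      rw [Finset.sum_congr rfl fun k _ => step k, stmt7_sum_one r _ hj]
      simp only [stmt7mm]
      split_ifs <;> first | (exfalso; omega) | ring | norm_num
    · omega
    · -- i = 0, j = 2·𝟙
      have step : ∀ k : Fin r, (stmt7pp r i k - stmt7pp r j k) ^ 2 = (4 : ℂ) := by
        intro k
        simp only [stmt7pp]
        split_ifs <;> first | (exfalso; omega) | norm_num | ring
      rw [Finset.sum_congr rfl fun k _ => step k, stmt7_sum_const]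
      simp only [stmt7mm]
      split_ifs <;> first | (exfalso; omega) | ring | norm_num
    · -- i = 2·𝟙, j basis
      have step : ∀ k : Fin r, (stmt7pp r i k - stmt7pp r j k) ^ 2
          = (if (k : ℕ) = (j : ℕ) then 1 else 4) := by
        intro k
        simp only [stmt7pp]
        split_ifs <;> first | (exfalso; omega) | norm_num | ring
      rw [Finset.sum_congr rfl fun k _ => step k, stmt7_sum_one r _ hj]
      simp only [stmt7mm]
      split_ifs <;> first | (exfalso; omega) | ring | norm_num
    · -- i = 2·𝟙, j = 0
      have step : ∀ k : Fin r, (stmt7pp r i k - stmt7pp r j k) ^ 2 = (4 : ℂ) := by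
        intro k
        simp only [stmt7pp]
        split_ifs <;> first | (exfalso; omega) | norm_num | ring
      rw [Finset.sum_congr rfl fun k _ => step k, stmt7_sum_const]
      simp only [stmt7mm]
      split_ifs <;> first | (exfalso; omega) | ring | norm_num
    · omega

set_option maxHeartbeats 1600000 in
lemma stmt7_key (r : ℕ) (hr : 1 ≤ r) :
    (Matrix.of (stmt7mm r)) * (Matrix.of (stmt7nn r)) = (8 * (r : ℂ)) • 1 := by
  ext i j
  rw [Matrix.mul_apply, Matrix.smul_apply, Matrix.one_apply]
  rw [Fin.sum_univ_castSucc, Fin.sum_univ_castSucc]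
  simp only [Matrix.of_apply, smul_eq_mul, mul_ite, mul_one, mul_zero]
  have hi2 := i.isLt
  have hj2 := j.isLt
  have hcases : ((i : ℕ) < r ∨ (i : ℕ) = r ∨ (i : ℕ) = r + 1) ∧
      ((j : ℕ) < r ∨ (j : ℕ) = r ∨ (j : ℕ) = r + 1) := by omega
  obtain ⟨hi | hi | hi, hj | hj | hj⟩ := hcases
  · -- i, j basis
    by_cases hij : (i : ℕ) = (j : ℕ)
    · rw [if_pos (Fin.ext hij)]
      have step : ∀ k : Fin r,
          stmt7mm r i (k.castSucc.castSucc) * stmt7nn r (k.castSucc.castSucc) j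
            = (if (k : ℕ) = (i : ℕ) then 0 else -24) := by
        intro k
        have hk := k.isLt
        simp only [stmt7mm, stmt7nn, Fin.coe_castSucc]
        split_ifs <;> first | (exfalso; omega) | ring | norm_num
      rw [Finset.sum_congr rfl fun k _ => step k, stmt7_sum_one r _ hi]
      simp only [stmt7mm, stmt7nn, Fin.coe_castSucc, Fin.val_last]
      split_ifs <;> first | (exfalso; omega) | ring | norm_num
    · rw [if_neg (fun h => hij (congrArg Fin.val h))]
      have step : ∀ k : Fin r,
          stmt7mm r i (k.castSucc.castSucc) * stmt7nn r (k.castSucc.castSucc) j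
            = (if (k : ℕ) = (i : ℕ) then 0
               else if (k : ℕ) = (j : ℕ) then -24 - 8 * (r : ℂ) else -24) := by
        intro k
        have hk := k.isLt
        simp only [stmt7mm, stmt7nn, Fin.coe_castSucc]
        split_ifs <;> first | (exfalso; omega) | ring | norm_num
      rw [Finset.sum_congr rfl fun k _ => step k, stmt7_sum_two r _ _ hi hj hij]
      simp only [stmt7mm, stmt7nn, Fin.coe_castSucc, Fin.val_last]
      split_ifs <;> first | (exfalso; omega) | ring | norm_num
  · -- i basis, j = r
    rw [if_neg (fun h => by subst h; omega)]
    have step : ∀ k : Fin r,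
        stmt7mm r i (k.castSucc.castSucc) * stmt7nn r (k.castSucc.castSucc) j
          = (if (k : ℕ) = (i : ℕ) then 0 else 8 * (4 * (r : ℂ) - 3)) := by
      intro k
      have hk := k.isLt
      simp only [stmt7mm, stmt7nn, Fin.coe_castSucc]
      split_ifs <;> first | (exfalso; omega) | ring | norm_num
    rw [Finset.sum_congr rfl fun k _ => step k, stmt7_sum_one r _ hi]
    simp only [stmt7mm, stmt7nn, Fin.coe_castSucc, Fin.val_last]
    split_ifs <;> first | (exfalso; omega) | ring | norm_num
  · -- i basis, j = r + 1
    rw [if_neg (fun h => by subst h; omega)]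
    have step : ∀ k : Fin r,
        stmt7mm r i (k.castSucc.castSucc) * stmt7nn r (k.castSucc.castSucc) j
          = (if (k : ℕ) = (i : ℕ) then 0 else 8) := by
      intro k
      have hk := k.isLt
      simp only [stmt7mm, stmt7nn, Fin.coe_castSucc]
      split_ifs <;> first | (exfalso; omega) | ring | norm_num
    rw [Finset.sum_congr rfl fun k _ => step k, stmt7_sum_one r _ hi]
    simp only [stmt7mm, stmt7nn, Fin.coe_castSucc, Fin.val_last]
    split_ifs <;> first | (exfalso; omega) | ring | norm_num
  · -- i = r, j basis
    rw [if_neg (fun h => by subst h; omega)]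
    have step : ∀ k : Fin r,
        stmt7mm r i (k.castSucc.castSucc) * stmt7nn r (k.castSucc.castSucc) j
          = (if (k : ℕ) = (j : ℕ) then -12 - 4 * (r : ℂ) else -12) := by
      intro k
      have hk := k.isLt
      simp only [stmt7mm, stmt7nn, Fin.coe_castSucc]
      split_ifs <;> first | (exfalso; omega) | ring | norm_num
    rw [Finset.sum_congr rfl fun k _ => step k, stmt7_sum_one r _ hj]
    simp only [stmt7mm, stmt7nn, Fin.coe_castSucc, Fin.val_last]
    split_ifs <;> first | (exfalso; omega) | ring | norm_num
  · -- i = r, j = r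
    rw [if_pos (Fin.ext (by omega))]
    have step : ∀ k : Fin r,
        stmt7mm r i (k.castSucc.castSucc) * stmt7nn r (k.castSucc.castSucc) j
          = 4 * (4 * (r : ℂ) - 3) := by
      intro k
      have hk := k.isLt
      simp only [stmt7mm, stmt7nn, Fin.coe_castSucc]
      split_ifs <;> first | (exfalso; omega) | ring | norm_num
    rw [Finset.sum_congr rfl fun k _ => step k, stmt7_sum_const]
    simp only [stmt7mm, stmt7nn, Fin.coe_castSucc, Fin.val_last]
    split_ifs <;> first | (exfalso; omega) | ring | norm_num
  · -- i = r, j = r + 1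
    rw [if_neg (fun h => by subst h; omega)]
    have step : ∀ k : Fin r,
        stmt7mm r i (k.castSucc.castSucc) * stmt7nn r (k.castSucc.castSucc) j
          = (4 : ℂ) := by
      intro k
      have hk := k.isLt
      simp only [stmt7mm, stmt7nn, Fin.coe_castSucc]
      split_ifs <;> first | (exfalso; omega) | ring | norm_num
    rw [Finset.sum_congr rfl fun k _ => step k, stmt7_sum_const]
    simp only [stmt7mm, stmt7nn, Fin.coe_castSucc, Fin.val_last]
    split_ifs <;> first | (exfalso; omega) | ring | norm_num
  · -- i = r + 1, j basis
    rw [if_neg (fun h => by subst h; omega)]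
    have step : ∀ k : Fin r,
        stmt7mm r i (k.castSucc.castSucc) * stmt7nn r (k.castSucc.castSucc) j
          = (if (k : ℕ) = (j : ℕ)
             then (4 * (r : ℂ) - 3) * (-12 - 4 * (r : ℂ))
             else (4 * (r : ℂ) - 3) * (-12)) := by
      intro k
      have hk := k.isLt
      simp only [stmt7mm, stmt7nn, Fin.coe_castSucc]
      split_ifs <;> first | (exfalso; omega) | ring | norm_num
    rw [Finset.sum_congr rfl fun k _ => step k, stmt7_sum_one r _ hj]
    simp only [stmt7mm, stmt7nn, Fin.coe_castSucc, Fin.val_last]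
    split_ifs <;> first | (exfalso; omega) | ring | norm_num
  · -- i = r + 1, j = r
    rw [if_neg (fun h => by subst h; omega)]
    have step : ∀ k : Fin r,
        stmt7mm r i (k.castSucc.castSucc) * stmt7nn r (k.castSucc.castSucc) j
          = (4 * (r : ℂ) - 3) * (4 * (4 * (r : ℂ) - 3)) := by
      intro k
      have hk := k.isLt
      simp only [stmt7mm, stmt7nn, Fin.coe_castSucc]
      split_ifs <;> first | (exfalso; omega) | ring | norm_num
    rw [Finset.sum_congr rfl fun k _ => step k, stmt7_sum_const]
    simp only [stmt7mm, stmt7nn, Fin.coe_castSucc, Fin.val_last]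
    split_ifs <;> first | (exfalso; omega) | ring | norm_num
  · -- i = r + 1, j = r + 1
    rw [if_pos (Fin.ext (by omega))]
    have step : ∀ k : Fin r,
        stmt7mm r i (k.castSucc.castSucc) * stmt7nn r (k.castSucc.castSucc) j
          = (4 * (r : ℂ) - 3) * 4 := by
      intro k
      have hk := k.isLt
      simp only [stmt7mm, stmt7nn, Fin.coe_castSucc]
      split_ifs <;> first | (exfalso; omega) | ring | norm_num
    rw [Finset.sum_congr rfl fun k _ => step k, stmt7_sum_const]
    simp only [stmt7mm, stmt7nn, Fin.coe_castSucc, Fin.val_last]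
    split_ifs <;> first | (exfalso; omega) | ring | norm_num

/-- For `r ≥ 1` there exist `p₁, …, p_{r+2} ∈ ℂ^r` such that the matrix
`M₀(i,j) = (pᵢ−pⱼ)·(pᵢ−pⱼ)` (standard bilinear form) has nonzero determinant; hence
`det M₀ ≠ 0` generically. -/
theorem stmt7 (r : ℕ) (hr : 1 ≤ r) :
    ∃ p : Fin (r + 2) → Fin r → ℂ,
      Matrix.det (Matrix.of fun i j : Fin (r + 2) => ∑ k, (p i k - p j k) ^ 2) ≠ 0 := by
  refine ⟨stmt7pp r, ?_⟩
  rw [stmt7_Mform r]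
  intro hdet
  have hmul := congrArg Matrix.det (stmt7_key r hr)
  rw [Matrix.det_mul, Matrix.det_smul, Matrix.det_one, hdet, zero_mul] at hmul
  have hR : ((r : ℂ)) ≠ 0 := Nat.cast_ne_zero.mpr (by omega)
  have h8 : (8 * (r : ℂ)) ≠ 0 := mul_ne_zero (by norm_num) hR
  rw [mul_one] at hmul
  exact pow_ne_zero _ h8 hmul.symm
end

section
/- Let n ≥ 5, let D(A) = Σ_{i,j} M_{ij}AᵢAⱼ be the quadratic form on ℂⁿ associated to a symmetric matrix M, and suppose a = (a₁,…,a_n) satisfies M·a = (1,…,1)ᵗ and Σᵢ aᵢ = 0. Define the (n−2)-form w = (ΣAᵢ)^{n−5} Σⱼ (−1)ʲ aⱼ Θⱼ / (2(n−3) D^{n−3}) on the complement of {D = 0} in ℙ^{n−1}. Then dw = (ΣAᵢ)^{n−4} Ω_{n−1} / D^{n−2}, i.e. w is a primitive of the 1-loop Feynman integrand η = (ΣAᵢ)^{n−4}Ω_{n−1}/D^{n−2}. -/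
open MvPolynomial

/-- The exterior derivative in coordinates: for a `k`-form on `ℂ^N`, given as a function of a
point and `k` vectors, `(dω)(x)(v₀,…,v_k) = Σ_t (−1)^t (D_{v_t} ω(·)(v₀,…,v̂_t,…,v_k))(x)`. -/
noncomputable def extd {N k : ℕ} (ω : (Fin N → ℂ) → (Fin k → (Fin N → ℂ)) → ℂ)
    (x : Fin N → ℂ) (v : Fin (k + 1) → (Fin N → ℂ)) : ℂ :=
  ∑ t : Fin (k + 1), (-1 : ℂ) ^ (t : ℕ) *
    fderiv ℂ (fun y => ω y (fun b => v (t.succAbove b))) x (v t)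

/-- The constant-coefficient `(m+1)`-form `τⱼ = dA₀∧⋯∧(dAⱼ omitted)∧⋯∧dA_{m+1}` on `ℂ^{m+2}`
(the indices `j.succAbove b` run in increasing order over all indices except `j`). -/
noncomputable def tauF {m : ℕ} (j : Fin (m + 2)) (v : Fin (m + 1) → (Fin (m + 2) → ℂ)) : ℂ :=
  Matrix.det (Matrix.of fun a b => v a (j.succAbove b))

/-- The `m`-form `Θⱼ = Σ_{i≠j} ±Aᵢ dA₀∧⋯∧(dAᵢ omitted)∧⋯∧(dAⱼ omitted)∧⋯∧dA_{m+1}` on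
`ℂ^{m+2}`, with sign `(−1)^i` for `i < j` and `(−1)^{i−1}` for `i > j`; here `i = j.succAbove t`
and the sign is `(−1)^t`. -/
noncomputable def ThetaF {m : ℕ} (j : Fin (m + 2)) (x : Fin (m + 2) → ℂ)
    (v : Fin m → (Fin (m + 2) → ℂ)) : ℂ :=
  ∑ t : Fin (m + 1), (-1 : ℂ) ^ (t : ℕ) * x (j.succAbove t) *
    Matrix.det (Matrix.of fun a b : Fin m => v a (j.succAbove (t.succAbove b)))

/-- The `(m+1)`-form `Ω = Σᵢ (−1)ⁱ Aᵢ dA₀∧⋯∧(dAᵢ omitted)∧⋯∧dA_{m+1}` on `ℂ^{m+2}`. -/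
noncomputable def OmegaF {m : ℕ} (x : Fin (m + 2) → ℂ)
    (v : Fin (m + 1) → (Fin (m + 2) → ℂ)) : ℂ :=
  ∑ i : Fin (m + 2), (-1 : ℂ) ^ (i : ℕ) * x i *
    Matrix.det (Matrix.of fun a b : Fin (m + 1) => v a (i.succAbove b))

section detAux

open Matrix Finset

lemma thetaF_eq_det {m : ℕ} (j : Fin (m+2)) (y : Fin (m+2) → ℂ) (w : Fin m → Fin (m+2) → ℂ) :
    ThetaF j y w = Matrix.det (Matrix.of fun a b : Fin (m+1) =>
      (Fin.cons y w : Fin (m+1) → Fin (m+2) → ℂ) a (j.succAbove b)) := by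
  rw [Matrix.det_succ_row_zero, ThetaF]
  refine Finset.sum_congr rfl fun p _ => ?_
  simp only [Matrix.of_apply, Fin.cons_zero]
  congr 1

lemma omegaF_eq_det {m : ℕ} (x : Fin (m+2) → ℂ) (v : Fin (m+1) → Fin (m+2) → ℂ) :
    OmegaF x v = Matrix.det (Matrix.of fun s i : Fin (m+2) =>
      (Fin.cons x v : Fin (m+2) → Fin (m+2) → ℂ) s i) := by
  rw [Matrix.det_succ_row_zero, OmegaF]
  refine Finset.sum_congr rfl fun p _ => ?_
  simp only [Matrix.of_apply, Fin.cons_zero]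
  congr 1

lemma cons_succAbove_eq {n : ℕ} (j : Fin (n+1)) :
    (Fin.cons j j.succAbove : Fin (n+1) → Fin (n+1)) = ⇑(j.cycleRange⁻¹) := by
  funext b
  refine Fin.cases ?_ (fun p => ?_) b
  · simp [Equiv.Perm.inv_def]
  · simp [Equiv.Perm.inv_def]

lemma det_col_insert {n : ℕ} (u : Fin (n+1) → Fin (n+1) → ℂ) (j i : Fin (n+1)) :
    ∑ s : Fin (n+1), (-1:ℂ)^(s:ℕ) * u s i *
      Matrix.det (Matrix.of fun a b : Fin n => u (s.succAbove a) (j.succAbove b))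
    = Matrix.det (Matrix.of fun s b : Fin (n+1) => u s ((Fin.cons i j.succAbove : Fin (n+1) → Fin (n+1)) b)) := by
  conv_rhs => rw [Matrix.det_succ_column_zero]
  refine Finset.sum_congr rfl fun s _ => ?_
  simp only [Matrix.of_apply, Fin.cons_zero]
  congr 1

lemma key_sum {n : ℕ} (c : Fin (n+1) → ℂ) (u : Fin (n+1) → Fin (n+1) → ℂ) (j : Fin (n+1)) :
    ∑ s : Fin (n+1), (-1:ℂ)^(s:ℕ) * (∑ i, c i * u s i) *
      Matrix.det (Matrix.of fun a b : Fin n => u (s.succAbove a) (j.succAbove b))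
    = (-1:ℂ)^(j:ℕ) * c j * Matrix.det (Matrix.of u) := by
  calc ∑ s : Fin (n+1), (-1:ℂ)^(s:ℕ) * (∑ i, c i * u s i) *
      Matrix.det (Matrix.of fun a b : Fin n => u (s.succAbove a) (j.succAbove b))
      = ∑ s : Fin (n+1), ∑ i, c i * ((-1:ℂ)^(s:ℕ) * u s i *
        Matrix.det (Matrix.of fun a b : Fin n => u (s.succAbove a) (j.succAbove b))) := by
        refine Finset.sum_congr rfl fun s _ => ?_
        rw [Finset.mul_sum, Finset.sum_mul]
        refine Finset.sum_congr rfl fun i _ => by ring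
    _ = ∑ i, c i * ∑ s : Fin (n+1), (-1:ℂ)^(s:ℕ) * u s i *
        Matrix.det (Matrix.of fun a b : Fin n => u (s.succAbove a) (j.succAbove b)) := by
        rw [Finset.sum_comm]
        exact Finset.sum_congr rfl fun i _ => (Finset.mul_sum _ _ _).symm
    _ = ∑ i, c i * Matrix.det (Matrix.of fun s b : Fin (n+1) => u s ((Fin.cons i j.succAbove : Fin (n+1) → Fin (n+1)) b)) := by
        exact Finset.sum_congr rfl fun i _ => by rw [det_col_insert]
    _ = (-1:ℂ)^(j:ℕ) * c j * Matrix.det (Matrix.of u) := by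
        rw [Finset.sum_eq_single j]
        · rw [cons_succAbove_eq]
          have : (Matrix.of fun s b : Fin (n+1) => u s ((j.cycleRange⁻¹ : Equiv.Perm (Fin (n+1))) b))
              = (Matrix.of u).submatrix id ⇑(j.cycleRange⁻¹) := rfl
          rw [this, Matrix.det_permute']
          simp [Fin.sign_cycleRange]
          ring
        · intro i _ hij
          obtain ⟨p, hp⟩ := Fin.exists_succAbove_eq hij
          rw [Matrix.det_zero_of_column_eq (show (0 : Fin (n+1)) ≠ p.succ from (Fin.succ_ne_zero p).symm)
            (fun s => by simp [Fin.cons_zero, Fin.cons_succ, hp])]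
          ring
        · intro h; exact absurd (Finset.mem_univ j) h

lemma insertion {m : ℕ} (c : Fin (m+2) → ℂ) (x : Fin (m+2) → ℂ)
    (v : Fin (m+1) → Fin (m+2) → ℂ) (j : Fin (m+2)) :
    ∑ t : Fin (m+1), (-1:ℂ)^(t:ℕ) * (∑ i, c i * v t i) * ThetaF j x (fun b => v (t.succAbove b))
    = (∑ i, c i * x i) * tauF j v - (-1:ℂ)^(j:ℕ) * c j * OmegaF x v := by
  have h := key_sum c (Fin.cons x v : Fin (m+2) → Fin (m+2) → ℂ) j
  rw [Fin.sum_univ_succ] at h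
  have h0 : (Matrix.of fun a b : Fin (m+1) =>
      (Fin.cons x v : Fin (m+2) → Fin (m+2) → ℂ) ((0 : Fin (m+2)).succAbove a) (j.succAbove b))
      = Matrix.of fun a b : Fin (m+1) => v a (j.succAbove b) := by
    ext a b
    simp [Fin.succAbove_zero, Fin.cons_succ]
  have h1 : ∀ t : Fin (m+1), (Matrix.of fun a b : Fin (m+1) =>
      (Fin.cons x v : Fin (m+2) → Fin (m+2) → ℂ) ((t.succ).succAbove a) (j.succAbove b))
      = Matrix.of fun a b : Fin (m+1) =>
        (Fin.cons x (fun b' => v (t.succAbove b')) : Fin (m+1) → Fin (m+2) → ℂ) a (j.succAbove b) := by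
    intro t
    ext a b
    refine Fin.cases ?_ (fun p => ?_) a
    · simp
    · simp [Fin.succ_succAbove_succ, Fin.cons_succ]
  simp only [h0, h1, Fin.cons_zero, Fin.cons_succ, Fin.val_zero, pow_zero, one_mul,
    Fin.val_succ, pow_succ] at h
  have hT : ∀ t : Fin (m+1), (Matrix.of fun a b : Fin (m+1) =>
      (Fin.cons x (fun b' => v (t.succAbove b')) : Fin (m+1) → Fin (m+2) → ℂ) a (j.succAbove b)).det
      = ThetaF j x (fun b' => v (t.succAbove b')) :=
    fun t => (thetaF_eq_det j x (fun b' => v (t.succAbove b'))).symm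
  have hO : (Matrix.of (Fin.cons x v : Fin (m+2) → Fin (m+2) → ℂ)).det = OmegaF x v :=
    (omegaF_eq_det x v).symm
  simp only [hT, hO] at h
  have hsum : ∑ t : Fin (m+1), ((-1:ℂ)^(t:ℕ) * -1 * ∑ i, c i * v t i) *
        ThetaF j x (fun b => v (t.succAbove b))
      = -∑ t : Fin (m+1), (-1:ℂ)^(t:ℕ) * (∑ i, c i * v t i) *
        ThetaF j x (fun b => v (t.succAbove b)) := by
    rw [← Finset.sum_neg_distrib]
    exact Finset.sum_congr rfl fun t _ => by ring
  rw [hsum] at h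
  unfold tauF
  linear_combination -h

lemma dtheta {m : ℕ} (v : Fin (m+1) → Fin (m+2) → ℂ) (j : Fin (m+2)) :
    ∑ t : Fin (m+1), (-1:ℂ)^(t:ℕ) * ThetaF j (v t) (fun b => v (t.succAbove b))
    = ((m:ℂ)+1) * tauF j v := by
  have hterm : ∀ t : Fin (m+1), ThetaF j (v t) (fun b => v (t.succAbove b))
      = (-1:ℂ)^(t:ℕ) * tauF j v := by
    intro t
    rw [thetaF_eq_det]
    have hrow : (Matrix.of fun a b : Fin (m+1) =>
        (Fin.cons (v t) (fun b' => v (t.succAbove b')) : Fin (m+1) → Fin (m+2) → ℂ) a (j.succAbove b))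
        = (Matrix.of fun a b : Fin (m+1) => v a (j.succAbove b)).submatrix
            ⇑(t.cycleRange⁻¹ : Equiv.Perm (Fin (m+1))) id := by
      ext a b
      refine Fin.cases ?_ (fun p => ?_) a
      · simp [Equiv.Perm.inv_def]
      · simp [Equiv.Perm.inv_def]
    rw [hrow, Matrix.det_permute]
    simp [Fin.sign_cycleRange, tauF]
  have hps : ∀ t : Fin (m+1), (-1:ℂ)^(t:ℕ) * ((-1:ℂ)^(t:ℕ) * tauF j v) = tauF j v := by
    intro t
    rw [← mul_assoc, ← pow_add]
    rw [Even.neg_one_pow ⟨(t:ℕ), by ring⟩, one_mul]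
  simp only [hterm, hps]
  simp [Finset.sum_const, Finset.card_univ]

end detAux

section calcAux

variable {E : Type*} [NormedAddCommGroup E] [NormedSpace ℂ E]

lemma hasFDerivAt_pows {f : E → ℂ} {f' : E →L[ℂ] ℂ} {x : E} (hf : HasFDerivAt f f' x) :
    ∀ n : ℕ, HasFDerivAt (fun y => f y ^ n) (((n : ℂ) * f x ^ (n-1)) • f') x := by
  intro n
  induction n with
  | zero =>
    have h0 : (((0:ℕ):ℂ) * f x ^ (0-1)) • f' = (0 : E →L[ℂ] ℂ) := by
      rw [Nat.cast_zero, zero_mul]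
      exact zero_smul ℂ f'
    rw [h0]
    simpa using (hasFDerivAt_const (1:ℂ) x : HasFDerivAt _ (0 : E →L[ℂ] ℂ) x)
  | succ n ih =>
    have h := ih.fun_mul hf
    have heq : (fun y => f y ^ n * f y) = fun y => f y ^ (n+1) := by
      funext y; rw [pow_succ]
    rw [heq] at h
    refine h.congr_fderiv (Eq.symm ?_)
    ext u
    simp only [ContinuousLinearMap.add_apply, ContinuousLinearMap.smul_apply, smul_eq_mul]
    cases n with
    | zero => simp
    | succ n =>
      simp only [Nat.add_sub_cancel, Nat.cast_add, Nat.cast_one]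
      rw [pow_succ]
      push_cast
      ring

lemma fderiv_div_eval {f g : E → ℂ} {f' g' : E →L[ℂ] ℂ} {x : E}
    (hf : HasFDerivAt f f' x) (hg : HasFDerivAt g g' x) (hgx : g x ≠ 0) (u : E) :
    fderiv ℂ (fun y => f y / g y) x u = (f' u * g x - f x * g' u) / g x ^ 2 := by
  have hinv : HasFDerivAt (fun y => (g y)⁻¹)
      ((-ContinuousLinearMap.mulLeftRight ℂ ℂ (g x)⁻¹ (g x)⁻¹).comp g') x :=
    (hasFDerivAt_inv' hgx).comp x hg
  have h := hf.fun_mul hinv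
  have heq : (fun y => f y * (g y)⁻¹) = fun y => f y / g y := by
    funext y; rw [div_eq_mul_inv]
  rw [heq] at h
  rw [h.fderiv]
  simp only [ContinuousLinearMap.add_apply, ContinuousLinearMap.smul_apply, smul_eq_mul,
    ContinuousLinearMap.comp_apply, ContinuousLinearMap.neg_apply,
    ContinuousLinearMap.mulLeftRight_apply]
  field_simp
  ring

end calcAux

section stmtAux

open Matrix Finset

set_option maxHeartbeats 2000000 in
/-- Let `n = k + 5 ≥ 5`, let `D(A) = Σ M_{ij} Aᵢ Aⱼ` be the quadratic form of a symmetric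
matrix `M`, and suppose `M·a = 𝟙` with `Σ aᵢ = 0`. Then the `(n−2)`-form
`w = (ΣAᵢ)^{n−5} Σⱼ (−1)ʲ aⱼ Θⱼ / (2(n−3) D^{n−3})` satisfies
`dw = (ΣAᵢ)^{n−4} Ω_{n−1} / D^{n−2}` at every point where `D ≠ 0`: `w` is a primitive of the
1-loop Feynman integrand `η`. -/
theorem stmt12 (k : ℕ) (M : Matrix (Fin (k + 5)) (Fin (k + 5)) ℂ) (hMsym : M.IsSymm)
    (a : Fin (k + 5) → ℂ)
    (ha1 : M.mulVec a = fun _ => 1) (ha0 : ∑ i, a i = 0)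
    (x : Fin (k + 5) → ℂ)
    (hD : (∑ i, ∑ j, M i j * x i * x j) ≠ 0)
    (v : Fin (k + 4) → (Fin (k + 5) → ℂ)) :
    extd (fun y w =>
        (∑ i, y i) ^ k * (∑ j : Fin (k + 5), (-1 : ℂ) ^ (j : ℕ) * a j * ThetaF j y w)
          / (2 * ((k : ℂ) + 2) * (∑ i, ∑ j', M i j' * y i * y j') ^ (k + 2))) x v
      = (∑ i, x i) ^ (k + 1) * OmegaF x v / (∑ i, ∑ j, M i j * x i * x j) ^ (k + 3) := by
  classical
  set Ex : ℂ := ∑ i, x i with hExdef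
  set Dx : ℂ := ∑ i, ∑ j, M i j * x i * x j with hDxdef
  have hk2 : ((k : ℂ) + 2) ≠ 0 := by
    have : ((k : ℂ) + 2) = ((k + 2 : ℕ) : ℂ) := by push_cast; ring
    rw [this]
    exact Nat.cast_ne_zero.mpr (by omega)
  have hC0 : (2 * ((k : ℂ) + 2)) ≠ 0 := mul_ne_zero two_ne_zero hk2
  -- derivative of the sum-of-coordinates function
  have hS : HasFDerivAt (fun y : Fin (k+5) → ℂ => ∑ i, y i)
      (∑ i : Fin (k+5), (ContinuousLinearMap.proj i : (Fin (k+5) → ℂ) →L[ℂ] ℂ)) x :=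
    HasFDerivAt.fun_sum (fun i _ => hasFDerivAt_apply i x)
  have hSap : ∀ u : Fin (k+5) → ℂ,
      (∑ i : Fin (k+5), (ContinuousLinearMap.proj i : (Fin (k+5) → ℂ) →L[ℂ] ℂ)) u = ∑ i, u i := by
    intro u
    simp [ContinuousLinearMap.sum_apply]
  -- derivative of Dq
  have hG : HasFDerivAt (fun y : Fin (k+5) → ℂ => ∑ i, ∑ j', M i j' * y i * y j')
      (∑ i : Fin (k+5), ∑ j' : Fin (k+5),
        ((M i j' * x i) • (ContinuousLinearMap.proj j' : (Fin (k+5) → ℂ) →L[ℂ] ℂ)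
          + (x j') • (M i j' • (ContinuousLinearMap.proj i : (Fin (k+5) → ℂ) →L[ℂ] ℂ)))) x :=
    HasFDerivAt.fun_sum (fun i _ => HasFDerivAt.fun_sum (fun j' _ =>
      ((hasFDerivAt_apply i x).const_mul (M i j')).mul (hasFDerivAt_apply j' x)))
  have hGap : ∀ u : Fin (k+5) → ℂ,
      (∑ i : Fin (k+5), ∑ j' : Fin (k+5),
        ((M i j' * x i) • (ContinuousLinearMap.proj j' : (Fin (k+5) → ℂ) →L[ℂ] ℂ)
          + (x j') • (M i j' • (ContinuousLinearMap.proj i : (Fin (k+5) → ℂ) →L[ℂ] ℂ)))) u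
      = ∑ i, ∑ j', (M i j' * x i * u j' + x j' * (M i j' * u i)) := by
    intro u
    simp [ContinuousLinearMap.sum_apply, mul_assoc]
  -- derivative of the Theta-combination, for any fixed collection w
  have hT : ∀ (w : Fin (k+3) → Fin (k+5) → ℂ), ∃ T : (Fin (k+5) → ℂ) →L[ℂ] ℂ,
      HasFDerivAt (fun y => ∑ j : Fin (k+5), (-1:ℂ)^(j:ℕ) * a j * ThetaF j y w) T x ∧
      ∀ u, T u = ∑ j : Fin (k+5), (-1:ℂ)^(j:ℕ) * a j * ThetaF j u w := by
    intro w
    refine ⟨∑ j : Fin (k+5), ((-1:ℂ)^(j:ℕ) * a j) •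
        (∑ p : Fin (k+4),
          (Matrix.det (Matrix.of fun a' b : Fin (k+3) => w a' (j.succAbove (p.succAbove b)))) •
          (((-1:ℂ)^(p:ℕ)) •
            (ContinuousLinearMap.proj (j.succAbove p) : (Fin (k+5) → ℂ) →L[ℂ] ℂ))), ?_, ?_⟩
    · refine HasFDerivAt.fun_sum (fun j _ => ?_)
      refine HasFDerivAt.const_mul ?_ _
      show HasFDerivAt (fun y => ∑ p : Fin (k+4), (-1:ℂ)^(p:ℕ) * y (j.succAbove p) *
        Matrix.det (Matrix.of fun a' b : Fin (k+3) => w a' (j.succAbove (p.succAbove b)))) _ x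
      exact HasFDerivAt.fun_sum (fun p _ =>
        ((hasFDerivAt_apply (j.succAbove p) x).const_mul ((-1:ℂ)^(p:ℕ))).mul_const _)
    · intro u
      simp only [ContinuousLinearMap.coe_sum', Finset.sum_apply, ContinuousLinearMap.smul_apply,
        ContinuousLinearMap.proj_apply, smul_eq_mul, ThetaF]
      refine Finset.sum_congr rfl fun j _ => ?_
      rw [Finset.mul_sum, Finset.mul_sum]
      refine Finset.sum_congr rfl fun p _ => ?_
      ring
  -- abbreviations
  set S : (Fin (k+5) → ℂ) →L[ℂ] ℂ :=
    ∑ i : Fin (k+5), (ContinuousLinearMap.proj i : (Fin (k+5) → ℂ) →L[ℂ] ℂ) with hSdef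
  set G : (Fin (k+5) → ℂ) →L[ℂ] ℂ :=
    ∑ i : Fin (k+5), ∑ j' : Fin (k+5),
        ((M i j' * x i) • (ContinuousLinearMap.proj j' : (Fin (k+5) → ℂ) →L[ℂ] ℂ)
          + (x j') • (M i j' • (ContinuousLinearMap.proj i : (Fin (k+5) → ℂ) →L[ℂ] ℂ))) with hGdef
  have hval : ∀ t : Fin (k+4),
      (-1:ℂ)^(t:ℕ) * fderiv ℂ (fun y => (∑ i, y i)^k *
          (∑ j : Fin (k+5), (-1:ℂ)^(j:ℕ) * a j * ThetaF j y fun b => v (t.succAbove b))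
          / (2*((k:ℂ)+2) * (∑ i, ∑ j', M i j' * y i * y j')^(k+2))) x (v t)
      = (-1:ℂ)^(t:ℕ) *
        (((((k:ℂ) * Ex^(k-1) * (∑ i, v t i) *
              (∑ j : Fin (k+5), (-1:ℂ)^(j:ℕ) * a j * ThetaF j x fun b => v (t.succAbove b))
            + Ex^k *
              (∑ j : Fin (k+5), (-1:ℂ)^(j:ℕ) * a j * ThetaF j (v t) fun b => v (t.succAbove b))) * Dx
          - ((k:ℂ)+2) * Ex^k *
              (∑ j : Fin (k+5), (-1:ℂ)^(j:ℕ) * a j * ThetaF j x fun b => v (t.succAbove b)) *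
              (∑ i, ∑ j', (M i j' * x i * v t j' + x j' * (M i j' * v t i)))))
        / (2*((k:ℂ)+2) * Dx^(k+3))) := by
    intro t
    obtain ⟨T, hTd, hTu⟩ := hT (fun b => v (t.succAbove b))
    have hf := (hasFDerivAt_pows hS k).fun_mul hTd
    have hgd := (hasFDerivAt_pows hG (k+2)).const_mul (2*((k:ℂ)+2))
    have hgx : (2*((k:ℂ)+2) * (∑ i, ∑ j', M i j' * x i * x j')^(k+2)) ≠ 0 :=
      mul_ne_zero hC0 (pow_ne_zero _ hD)
    rw [(fderiv_div_eval hf hgd hgx (v t) :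
      fderiv ℂ (fun y => (∑ i, y i)^k *
          (∑ j : Fin (k+5), (-1:ℂ)^(j:ℕ) * a j * ThetaF j y fun b => v (t.succAbove b))
          / (2*((k:ℂ)+2) * (∑ i, ∑ j', M i j' * y i * y j')^(k+2))) x (v t) = _)]
    simp only [ContinuousLinearMap.add_apply, ContinuousLinearMap.smul_apply, smul_eq_mul,
      hTu, hSdef, hGdef, hSap, hGap, ContinuousLinearMap.sum_apply,
      ContinuousLinearMap.proj_apply]
    rw [show k+2-1 = k+1 from rfl]
    rw [show (∑ i : Fin (k+5), ∑ j' : Fin (k+5), M i j' * x i * x j') = Dx from rfl,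
      show (∑ i : Fin (k+5), x i) = Ex from rfl]
    congr 1
    rw [div_eq_div_iff (pow_ne_zero _ (mul_ne_zero hC0 (pow_ne_zero _ hD)))
      (mul_ne_zero hC0 (pow_ne_zero _ hD))]
    push_cast
    ring
  -- fold extd and rewrite each derivative
  have h1 : extd (fun y w =>
        (∑ i, y i) ^ k * (∑ j : Fin (k + 5), (-1 : ℂ) ^ (j : ℕ) * a j * ThetaF j y w)
          / (2 * ((k : ℂ) + 2) * (∑ i, ∑ j', M i j' * y i * y j') ^ (k + 2))) x v
      = ∑ t : Fin (k+4), (-1:ℂ)^(t:ℕ) * fderiv ℂ (fun y => (∑ i, y i)^k *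
          (∑ j : Fin (k+5), (-1:ℂ)^(j:ℕ) * a j * ThetaF j y fun b => v (t.succAbove b))
          / (2*((k:ℂ)+2) * (∑ i, ∑ j', M i j' * y i * y j')^(k+2))) x (v t) := rfl
  rw [h1, Finset.sum_congr rfl (fun t _ => hval t)]
  -- linear-form representation of the derivative of D
  set gvec : Fin (k+5) → ℂ := fun l => (∑ i, M i l * x i) + (∑ j', M l j' * x j') with hgvec
  have hGrep : ∀ u : Fin (k+5) → ℂ,
      (∑ i, ∑ j', (M i j' * x i * u j' + x j' * (M i j' * u i))) = ∑ l, gvec l * u l := by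
    intro u
    have e1 : (∑ i, ∑ j', (M i j' * x i * u j' + x j' * (M i j' * u i)))
        = (∑ i : Fin (k+5), ∑ j', M i j' * x i * u j') + (∑ i : Fin (k+5), ∑ j', x j' * (M i j' * u i)) := by
      rw [← Finset.sum_add_distrib]
      exact Finset.sum_congr rfl fun i _ => by rw [← Finset.sum_add_distrib]
    rw [e1, Finset.sum_comm]
    calc (∑ j' : Fin (k+5), ∑ i, M i j' * x i * u j')
          + (∑ i : Fin (k+5), ∑ j', x j' * (M i j' * u i))
        = (∑ l : Fin (k+5), (∑ i, M i l * x i) * u l)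
          + (∑ l : Fin (k+5), (∑ j', M l j' * x j') * u l) := by
          congr 1
          · exact Finset.sum_congr rfl fun l _ => by rw [Finset.sum_mul]
          · refine Finset.sum_congr rfl fun l _ => ?_
            rw [Finset.sum_mul]
            exact Finset.sum_congr rfl fun j' _ => by ring
      _ = ∑ l, gvec l * u l := by
          rw [← Finset.sum_add_distrib]
          exact Finset.sum_congr rfl fun l _ => by rw [hgvec]; ring
  simp only [hGrep]
  simp only [← mul_div_assoc]
  rw [← Finset.sum_div]
  rw [div_eq_div_iff (mul_ne_zero hC0 (pow_ne_zero _ hD)) (pow_ne_zero _ hD)]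
  suffices H : ∑ t : Fin (k+4), (-1:ℂ)^(t:ℕ) *
      ((((k:ℂ) * Ex^(k-1) * ∑ i, v t i) *
          (∑ j : Fin (k+5), (-1:ℂ)^(j:ℕ) * a j * ThetaF j x fun b => v (t.succAbove b))
        + Ex^k * (∑ j : Fin (k+5), (-1:ℂ)^(j:ℕ) * a j * ThetaF j (v t) fun b => v (t.succAbove b))) * Dx
       - (((k:ℂ)+2) * Ex^k * (∑ j : Fin (k+5), (-1:ℂ)^(j:ℕ) * a j * ThetaF j x fun b => v (t.succAbove b)))
          * (∑ l, gvec l * v t l))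
      = 2*((k:ℂ)+2) * (Ex^(k+1) * OmegaF x v) by
    rw [H]; ring
  -- auxiliary scalar facts
  have hsym' : ∀ p q, M p q = M q p := fun p q => (congrFun (congrFun hMsym p) q).symm
  have h1i : ∀ i, (∑ j, M i j * a j) = 1 := fun i => congrFun ha1 i
  have hsq : ∀ j : Fin (k+5), (-1:ℂ)^(j:ℕ) * (-1:ℂ)^(j:ℕ) = 1 := by
    intro j
    rw [← pow_add]
    exact Even.neg_one_pow ⟨(j:ℕ), by ring⟩
  have hEk1 : (k:ℂ) * Ex^(k-1) * Ex = (k:ℂ) * Ex^k := by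
    cases k with
    | zero => simp
    | succ n =>
      rw [show n+1-1 = n from rfl, pow_succ]
      ring
  have hGx : (∑ l, gvec l * x l) = 2 * Dx := by
    calc ∑ l, gvec l * x l
        = (∑ l : Fin (k+5), ∑ i, M i l * x i * x l)
          + (∑ l : Fin (k+5), ∑ j', M l j' * x j' * x l) := by
          rw [← Finset.sum_add_distrib]
          refine Finset.sum_congr rfl fun l _ => ?_
          rw [hgvec, add_mul, Finset.sum_mul, Finset.sum_mul]
      _ = Dx + Dx := by
          congr 1
          · rw [Finset.sum_comm, hDxdef]
          · rw [hDxdef]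
            exact Finset.sum_congr rfl fun l _ => Finset.sum_congr rfl fun j' _ => by ring
      _ = 2 * Dx := by ring
  have hag : (∑ jj, a jj * gvec jj) = 2 * Ex := by
    calc ∑ jj, a jj * gvec jj
        = (∑ jj : Fin (k+5), ∑ i, a jj * (M i jj * x i))
          + (∑ jj : Fin (k+5), ∑ j', a jj * (M jj j' * x j')) := by
          rw [← Finset.sum_add_distrib]
          refine Finset.sum_congr rfl fun jj _ => ?_
          rw [hgvec, mul_add, Finset.mul_sum, Finset.mul_sum]
      _ = (∑ i : Fin (k+5), (∑ jj, M i jj * a jj) * x i)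
          + (∑ j' : Fin (k+5), (∑ jj, M j' jj * a jj) * x j') := by
          congr 1
          · rw [Finset.sum_comm]
            refine Finset.sum_congr rfl fun i _ => ?_
            rw [Finset.sum_mul]
            exact Finset.sum_congr rfl fun jj _ => by ring
          · rw [Finset.sum_comm]
            refine Finset.sum_congr rfl fun j' _ => ?_
            rw [Finset.sum_mul]
            refine Finset.sum_congr rfl fun jj _ => ?_
            rw [hsym' jj j']
            ring
      _ = (∑ i, x i) + (∑ j', x j') := by
          congr 1
          · exact Finset.sum_congr rfl fun i _ => by rw [h1i i, one_mul]
          · exact Finset.sum_congr rfl fun i _ => by rw [h1i i, one_mul]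
      _ = 2 * Ex := by rw [hExdef]; ring
  -- insertion identities
  have ins1 : ∀ j : Fin (k+5), ∑ t : Fin (k+4),
      (-1:ℂ)^(t:ℕ) * (∑ i, v t i) * ThetaF j x (fun b => v (t.succAbove b))
      = Ex * tauF j v - (-1:ℂ)^(j:ℕ) * OmegaF x v := by
    intro j
    have h := insertion (fun _ => (1:ℂ)) x v j
    simp only [one_mul] at h
    rw [hExdef]
    simpa using h
  have ins2 : ∀ j : Fin (k+5), ∑ t : Fin (k+4),
      (-1:ℂ)^(t:ℕ) * (∑ l, gvec l * v t l) * ThetaF j x (fun b => v (t.succAbove b))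
      = 2 * Dx * tauF j v - (-1:ℂ)^(j:ℕ) * gvec j * OmegaF x v := by
    intro j
    have h := insertion gvec x v j
    rw [hGx] at h
    exact h
  have ins3 : ∀ j : Fin (k+5), ∑ t : Fin (k+4),
      (-1:ℂ)^(t:ℕ) * ThetaF j (v t) (fun b => v (t.succAbove b))
      = ((k:ℂ)+4) * tauF j v := by
    intro j
    have h := dtheta v j
    rw [h]
    push_cast
    ring
  -- expand each term into a sum over j
  have expand : ∀ t : Fin (k+4),
      (-1:ℂ)^(t:ℕ) *
      ((((k:ℂ) * Ex^(k-1) * ∑ i, v t i) *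
          (∑ j : Fin (k+5), (-1:ℂ)^(j:ℕ) * a j * ThetaF j x fun b => v (t.succAbove b))
        + Ex^k * (∑ j : Fin (k+5), (-1:ℂ)^(j:ℕ) * a j * ThetaF j (v t) fun b => v (t.succAbove b))) * Dx
       - (((k:ℂ)+2) * Ex^k * (∑ j : Fin (k+5), (-1:ℂ)^(j:ℕ) * a j * ThetaF j x fun b => v (t.succAbove b)))
          * (∑ l, gvec l * v t l))
      = ∑ j : Fin (k+5),
          (((k:ℂ) * Ex^(k-1) * Dx) * ((-1:ℂ)^(j:ℕ) * a j *
            ((-1:ℂ)^(t:ℕ) * (∑ i, v t i) * ThetaF j x fun b => v (t.succAbove b)))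
          + (Ex^k * Dx) * ((-1:ℂ)^(j:ℕ) * a j *
            ((-1:ℂ)^(t:ℕ) * ThetaF j (v t) fun b => v (t.succAbove b)))
          - (((k:ℂ)+2) * Ex^k) * ((-1:ℂ)^(j:ℕ) * a j *
            ((-1:ℂ)^(t:ℕ) * (∑ l, gvec l * v t l) * ThetaF j x fun b => v (t.succAbove b)))) := by
    intro t
    rw [Finset.sum_sub_distrib, Finset.sum_add_distrib, ← Finset.mul_sum, ← Finset.mul_sum,
      ← Finset.mul_sum]
    have p1 : ∑ j : Fin (k+5), (-1:ℂ)^(j:ℕ) * a j *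
        ((-1:ℂ)^(t:ℕ) * (∑ i, v t i) * ThetaF j x fun b => v (t.succAbove b))
        = ((-1:ℂ)^(t:ℕ) * (∑ i, v t i)) *
          ∑ j : Fin (k+5), (-1:ℂ)^(j:ℕ) * a j * ThetaF j x fun b => v (t.succAbove b) := by
      conv_rhs => rw [Finset.mul_sum]
      exact Finset.sum_congr rfl fun j _ => by ring
    have p2 : ∑ j : Fin (k+5), (-1:ℂ)^(j:ℕ) * a j *
        ((-1:ℂ)^(t:ℕ) * ThetaF j (v t) fun b => v (t.succAbove b))
        = (-1:ℂ)^(t:ℕ) *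
          ∑ j : Fin (k+5), (-1:ℂ)^(j:ℕ) * a j * ThetaF j (v t) fun b => v (t.succAbove b) := by
      conv_rhs => rw [Finset.mul_sum]
      exact Finset.sum_congr rfl fun j _ => by ring
    have p3 : ∑ j : Fin (k+5), (-1:ℂ)^(j:ℕ) * a j *
        ((-1:ℂ)^(t:ℕ) * (∑ l, gvec l * v t l) * ThetaF j x fun b => v (t.succAbove b))
        = ((-1:ℂ)^(t:ℕ) * (∑ l, gvec l * v t l)) *
          ∑ j : Fin (k+5), (-1:ℂ)^(j:ℕ) * a j * ThetaF j x fun b => v (t.succAbove b) := by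
      conv_rhs => rw [Finset.mul_sum]
      exact Finset.sum_congr rfl fun j _ => by ring
    rw [p1, p2, p3]
    ring
  rw [Finset.sum_congr rfl (fun t _ => expand t), Finset.sum_comm]
  -- evaluate the inner sums over t
  have inner : ∀ j : Fin (k+5),
      (∑ t : Fin (k+4),
          (((k:ℂ) * Ex^(k-1) * Dx) * ((-1:ℂ)^(j:ℕ) * a j *
            ((-1:ℂ)^(t:ℕ) * (∑ i, v t i) * ThetaF j x fun b => v (t.succAbove b)))
          + (Ex^k * Dx) * ((-1:ℂ)^(j:ℕ) * a j *
            ((-1:ℂ)^(t:ℕ) * ThetaF j (v t) fun b => v (t.succAbove b)))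
          - (((k:ℂ)+2) * Ex^k) * ((-1:ℂ)^(j:ℕ) * a j *
            ((-1:ℂ)^(t:ℕ) * (∑ l, gvec l * v t l) * ThetaF j x fun b => v (t.succAbove b)))))
      = ((k:ℂ) * Ex^(k-1) * Dx * Ex + Ex^k * Dx * ((k:ℂ)+4) - ((k:ℂ)+2) * Ex^k * (2 * Dx)) *
          ((-1:ℂ)^(j:ℕ) * a j * tauF j v)
        - ((k:ℂ) * Ex^(k-1) * Dx) * (a j * OmegaF x v)
        + (((k:ℂ)+2) * Ex^k) * (a j * gvec j * OmegaF x v) := by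
    intro j
    rw [Finset.sum_sub_distrib, Finset.sum_add_distrib]
    have q1 : ∑ t : Fin (k+4), ((k:ℂ) * Ex^(k-1) * Dx) * ((-1:ℂ)^(j:ℕ) * a j *
          ((-1:ℂ)^(t:ℕ) * (∑ i, v t i) * ThetaF j x fun b => v (t.succAbove b)))
        = ((k:ℂ) * Ex^(k-1) * Dx) * ((-1:ℂ)^(j:ℕ) * a j *
            (Ex * tauF j v - (-1:ℂ)^(j:ℕ) * OmegaF x v)) := by
      rw [← Finset.mul_sum, ← Finset.mul_sum, ins1 j]
    have q2 : ∑ t : Fin (k+4), (Ex^k * Dx) * ((-1:ℂ)^(j:ℕ) * a j *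
          ((-1:ℂ)^(t:ℕ) * ThetaF j (v t) fun b => v (t.succAbove b)))
        = (Ex^k * Dx) * ((-1:ℂ)^(j:ℕ) * a j * (((k:ℂ)+4) * tauF j v)) := by
      rw [← Finset.mul_sum, ← Finset.mul_sum, ins3 j]
    have q3 : ∑ t : Fin (k+4), (((k:ℂ)+2) * Ex^k) * ((-1:ℂ)^(j:ℕ) * a j *
          ((-1:ℂ)^(t:ℕ) * (∑ l, gvec l * v t l) * ThetaF j x fun b => v (t.succAbove b)))
        = (((k:ℂ)+2) * Ex^k) * ((-1:ℂ)^(j:ℕ) * a j *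
            (2 * Dx * tauF j v - (-1:ℂ)^(j:ℕ) * gvec j * OmegaF x v)) := by
      rw [← Finset.mul_sum, ← Finset.mul_sum, ins2 j]
    rw [q1, q2, q3]
    linear_combination ((((k:ℂ)+2) * Ex^k) * (a j * gvec j * OmegaF x v)
      - ((k:ℂ) * Ex^(k-1) * Dx) * (a j * OmegaF x v)) * hsq j
  rw [Finset.sum_congr rfl (fun j _ => inner j)]
  rw [Finset.sum_add_distrib, Finset.sum_sub_distrib, ← Finset.mul_sum, ← Finset.mul_sum,
    ← Finset.mul_sum]
  have r1 : ∑ j : Fin (k+5), a j * OmegaF x v = 0 := by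
    rw [← Finset.sum_mul, ha0, zero_mul]
  have r2 : ∑ j : Fin (k+5), a j * gvec j * OmegaF x v = 2 * Ex * OmegaF x v := by
    rw [← Finset.sum_mul, hag]
  rw [r1, r2]
  linear_combination (Dx * ∑ j : Fin (k+5), (-1:ℂ)^(j:ℕ) * a j * tauF j v) * hEk1

end stmtAux
end
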